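/- arXiv:1906.07995 — 6 statements merged into one kernel-verified Lean document; each statement's English description precedes it below -/
import Mathlib

section
/- For every real number β > 1, the set { x ∈ [0,1) : r̂_β(x) = 0 } has full Lebesgue measure in [0,1), i.e. its complement in [0,1) has Lebesgue measure zero. -/
open Set Filter MeasureTheory
open scoped ENNReal

/-- The β-transformation `x ↦ βx mod 1`. -/
noncomputable def Tbeta (β : ℝ) (x : ℝ) : ℝ := β * x - ⌊β * x⌋

/-- The asymptotic recurrence exponent
`r_β(x) = sup {r ∈ [0,∞] : |T_β^n x - x| < β^{-rn} for infinitely many n}`. -/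
noncomputable def rBeta (β : ℝ) (x : ℝ) : ℝ≥0∞ :=
  ⨆ r ∈ {r : ℝ | 0 ≤ r ∧
      ∃ᶠ n : ℕ in atTop, |(Tbeta β)^[n] x - x| < β ^ (-(r * (n : ℝ)))},
    ENNReal.ofReal r

/-- The uniform recurrence exponent
`r̂_β(x) = sup {r̂ ∈ [0,∞] : ∀ N ≫ 1, ∃ 1 ≤ n ≤ N, |T_β^n x - x| < β^{-r̂N}}`. -/
noncomputable def rHatBeta (β : ℝ) (x : ℝ) : ℝ≥0∞ :=
  ⨆ r ∈ {r : ℝ | 0 ≤ r ∧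
      ∀ᶠ N : ℕ in atTop, ∃ n : ℕ, 1 ≤ n ∧ n ≤ N ∧
        |(Tbeta β)^[n] x - x| < β ^ (-(r * (N : ℝ)))},
    ENNReal.ofReal r

/-! If `r̂_β(x) > 0` then already `r_β(x) > 0`: either `x` is periodic, or its finitely many early
returns stay a fixed distance away from `x`, so the close returns that the uniform condition
provides before every large time `N` happen at times `n` comparable to `N`, i.e. with
`|T_β^n x - x| < β^{-r̂ n}` infinitely often. It therefore suffices that `{x : r_β(x) ≥ r}` is
null for each `r > 0`, which is Borel–Cantelli: `T_β^n` is affine with slope `β^n` on each of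
its at most `1 + β + ⋯ + β^n` branches, so `{x : |T_β^n x - x| < ε}` lies in that many
intervals of length `2ε / (β^n - 1)`, of total length `O(ε)`. -/

lemma Finset.sum_biUnion_le_of_nonneg {ι α M : Type*} [DecidableEq α] [AddCommMonoid M]
    [Preorder M] [AddLeftMono M] {s : Finset ι} {t : ι → Finset α} {g : α → M}
    (hg : ∀ x ∈ s.biUnion t, 0 ≤ g x) :
    ∑ x ∈ s.biUnion t, g x ≤ ∑ i ∈ s, ∑ x ∈ t i, g x := by
  have hsigma : s.biUnion t = (s.sigma t).image Sigma.snd := by ext; simp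
  rw [hsigma] at hg ⊢
  exact (sum_image_le_of_nonneg hg).trans_eq (sum_sigma _ _ _)

lemma Real.rpow_neg_mul_natCast {x : ℝ} (hx : 0 ≤ x) (y : ℝ) (n : ℕ) :
    x ^ (-(y * n)) = (x ^ (-y)) ^ n := by
  rw [← neg_mul, Real.rpow_mul_natCast hx]

lemma Function.frequently_dist_iterate_lt_pow_of_eventually {α : Type*} [MetricSpace α]
    {f : α → α} {x : α} {a : ℝ} (ha₀ : 0 < a) (ha₁ : a < 1)
    (h : ∀ᶠ N : ℕ in atTop, ∃ n, 1 ≤ n ∧ n ≤ N ∧ dist (f^[n] x) x < a ^ N) :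
    ∃ᶠ n : ℕ in atTop, dist (f^[n] x) x < a ^ n := by
  by_cases hper : ∃ m, 0 < m ∧ Function.IsPeriodicPt f m x
  · obtain ⟨m, hm, hx⟩ := hper
    refine frequently_atTop.2 fun k => ⟨k * m, Nat.le_mul_of_pos_right k hm, ?_⟩
    rw [(hx.const_mul k).eq, dist_self]
    positivity
  push Not at hper
  by_contra! hfreq
  obtain ⟨n₀, hn₀⟩ := eventually_atTop.1 hfreq
  have hsmall : ∀ᶠ N : ℕ in atTop, ∀ n ∈ Finset.Ico 1 n₀, a ^ N < dist (f^[n] x) x :=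
    (eventually_all_finset _).2 fun n hn => (tendsto_pow_atTop_nhds_zero_of_lt_one ha₀.le ha₁)
      |>.eventually_lt_const (dist_pos.2 (hper n (Finset.mem_Ico.1 hn).1))
  obtain ⟨N, ⟨n, hn₁, hnN, hlt⟩, hN⟩ := (h.and hsmall).exists
  rcases lt_or_ge n n₀ with hn | hn
  · exact (hN n (Finset.mem_Ico.2 ⟨hn₁, hn⟩)).not_gt hlt
  · exact (hn₀ n hn).not_gt (hlt.trans_le (pow_le_pow_of_le_one ha₀.le ha₁.le hnN))

/-- Cuts `[a, b)`, given as `p = (a, b)`, into the pieces `[a + m/c, a + (m+1)/c) ∩ [a, b)`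
on which `⌊c (y - a)⌋ = m`. -/
noncomputable def subdivide (c : ℝ) (p : ℝ × ℝ) : Finset (ℝ × ℝ) :=
  (Finset.range ⌈c * (p.2 - p.1)⌉₊).image fun m : ℕ =>
    (min (p.1 + m / c) p.2, min (p.1 + ((m + 1 : ℕ) : ℝ) / c) p.2)

section Subdivide

variable {c : ℝ} {p q : ℝ × ℝ}

lemma exists_eq_of_mem_subdivide (hc : 0 < c) (hq : q ∈ subdivide c p) :
    ∃ m : ℕ, q.1 = p.1 + m / c ∧ q.1 < p.2 ∧ q.2 = min (q.1 + 1 / c) p.2 := by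
  obtain ⟨m, hm, rfl⟩ := Finset.mem_image.1 hq
  have hlt : p.1 + m / c < p.2 := by
    rw [Finset.mem_range, Nat.lt_ceil, ← div_lt_iff₀' hc] at hm
    linarith
  simp only [min_eq_left hlt.le]
  refine ⟨m, rfl, hlt, ?_⟩
  rw [Nat.cast_succ, add_div, ← add_assoc]

lemma Ico_subset_of_mem_subdivide (hc : 0 < c) (hq : q ∈ subdivide c p) :
    Ico q.1 q.2 ⊆ Ico p.1 p.2 := by
  obtain ⟨m, h1, -, h2⟩ := exists_eq_of_mem_subdivide hc hq
  refine Ico_subset_Ico ?_ (h2 ▸ min_le_right _ _)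
  rw [h1]
  exact le_add_of_nonneg_right (by positivity)

lemma fst_le_snd_of_mem_subdivide (hc : 0 < c) (hq : q ∈ subdivide c p) : q.1 ≤ q.2 := by
  obtain ⟨m, -, hlt, h2⟩ := exists_eq_of_mem_subdivide hc hq
  rw [h2]
  exact le_min (by simp [hc.le]) hlt.le

lemma exists_mem_subdivide (hc : 0 < c) {x : ℝ} (hx : x ∈ Ico p.1 p.2) :
    ∃ q ∈ subdivide c p, x ∈ Ico q.1 q.2 := by
  have hx₀ : 0 ≤ c * (x - p.1) := mul_nonneg hc.le (by linarith [hx.1])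
  set m := ⌊c * (x - p.1)⌋₊
  have hm : (m : ℝ) ≤ c * (x - p.1) := Nat.floor_le hx₀
  have hm' : c * (x - p.1) < m + 1 := Nat.lt_floor_add_one _
  have hmc : (m : ℝ) / c ≤ x - p.1 := (div_le_iff₀' hc).2 hm
  have hmc' : x - p.1 < (m + 1) / c := (lt_div_iff₀' hc).2 hm'
  refine ⟨_, Finset.mem_image.2 ⟨m, Finset.mem_range.2 ?_, rfl⟩, ?_, ?_⟩
  · rw [Nat.lt_ceil]
    exact hm.trans_lt (mul_lt_mul_of_pos_left (sub_lt_sub_right hx.2 _) hc)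
  · exact min_le_of_left_le (by linarith)
  · push_cast
    exact lt_min (by linarith) hx.2

lemma sum_subdivide_le (hc : 0 < c) (hp : p.1 ≤ p.2) :
    ∑ q ∈ subdivide c p, (q.2 - q.1) ≤ p.2 - p.1 := by
  set F : ℕ → ℝ := fun m => min (p.1 + m / c) p.2
  have hF₀ : F 0 = p.1 := by simp [F, hp]
  have hF : F ⌈c * (p.2 - p.1)⌉₊ = p.2 := by
    refine min_eq_right ?_
    rw [← sub_le_iff_le_add', le_div_iff₀' hc]
    exact Nat.le_ceil _
  calc ∑ q ∈ subdivide c p, (q.2 - q.1)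
      ≤ ∑ m ∈ Finset.range ⌈c * (p.2 - p.1)⌉₊, (F (m + 1) - F m) :=
        Finset.sum_image_le_of_nonneg fun q hq => sub_nonneg.2 (fst_le_snd_of_mem_subdivide hc hq)
    _ = p.2 - p.1 := by rw [Finset.sum_range_sub, hF, hF₀]

lemma card_subdivide_le (hc : 0 < c) (hp : p.1 ≤ p.2) :
    ((subdivide c p).card : ℝ) ≤ c * (p.2 - p.1) + 1 :=
  calc ((subdivide c p).card : ℝ) ≤ ⌈c * (p.2 - p.1)⌉₊ := by
        exact_mod_cast Finset.card_image_le.trans (Finset.card_range _).le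
    _ ≤ c * (p.2 - p.1) + 1 := (Nat.ceil_lt_add_one (mul_nonneg hc.le (sub_nonneg.2 hp))).le

end Subdivide

/-- The cylinders of order `n` of `T_β`, a pair `(a, b)` standing for `[a, b)`. -/
noncomputable def branches (β : ℝ) : ℕ → Finset (ℝ × ℝ)
  | 0 => {(0, 1)}
  | n + 1 => (branches β n).biUnion (subdivide (β ^ (n + 1)))

section Branches

variable {β : ℝ} {n : ℕ} {p : ℝ × ℝ}

lemma mem_branches_succ :
    p ∈ branches β (n + 1) ↔ ∃ p' ∈ branches β n, p ∈ subdivide (β ^ (n + 1)) p' :=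
  Finset.mem_biUnion

lemma fst_le_snd_of_mem_branches (hβ : 0 < β) (hp : p ∈ branches β n) : p.1 ≤ p.2 := by
  cases n with
  | zero => obtain rfl := Finset.mem_singleton.1 hp; norm_num
  | succ n =>
    obtain ⟨p', -, hp⟩ := mem_branches_succ.1 hp
    exact fst_le_snd_of_mem_subdivide (by positivity) hp

lemma exists_mem_branches (hβ : 0 < β) {x : ℝ} (hx : x ∈ Ico (0 : ℝ) 1) :
    ∃ p ∈ branches β n, x ∈ Ico p.1 p.2 := by
  induction n with
  | zero => exact ⟨(0, 1), Finset.mem_singleton_self _, hx⟩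
  | succ n ih =>
    obtain ⟨p', hp', hxp'⟩ := ih
    obtain ⟨p, hp, hxp⟩ := exists_mem_subdivide (c := β ^ (n + 1)) (by positivity) hxp'
    exact ⟨p, mem_branches_succ.2 ⟨p', hp', hp⟩, hxp⟩

lemma sum_branches_le (hβ : 0 < β) : ∑ p ∈ branches β n, (p.2 - p.1) ≤ 1 := by
  induction n with
  | zero => simp [branches]
  | succ n ih =>
    calc ∑ p ∈ branches β (n + 1), (p.2 - p.1)
        ≤ ∑ p' ∈ branches β n, ∑ p ∈ subdivide (β ^ (n + 1)) p', (p.2 - p.1) :=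
          Finset.sum_biUnion_le_of_nonneg fun p hp =>
            sub_nonneg.2 (fst_le_snd_of_mem_branches (n := n + 1) hβ hp)
      _ ≤ ∑ p' ∈ branches β n, (p'.2 - p'.1) := Finset.sum_le_sum fun p' hp' =>
          sum_subdivide_le (by positivity) (fst_le_snd_of_mem_branches hβ hp')
      _ ≤ 1 := ih

lemma card_branches_le (hβ : 0 < β) :
    ((branches β n).card : ℝ) ≤ ∑ j ∈ Finset.range (n + 1), β ^ j := by
  induction n with
  | zero => simp [branches]
  | succ n ih =>
    calc ((branches β (n + 1)).card : ℝ)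
        ≤ ∑ p ∈ branches β n, ((subdivide (β ^ (n + 1)) p).card : ℝ) := by
          exact_mod_cast Finset.card_biUnion_le
      _ ≤ ∑ p ∈ branches β n, (β ^ (n + 1) * (p.2 - p.1) + 1) := Finset.sum_le_sum fun p hp =>
          card_subdivide_le (by positivity) (fst_le_snd_of_mem_branches hβ hp)
      _ = β ^ (n + 1) * ∑ p ∈ branches β n, (p.2 - p.1) + (branches β n).card := by
          rw [Finset.sum_add_distrib, Finset.mul_sum, Finset.sum_const, nsmul_one]
      _ ≤ β ^ (n + 1) * 1 + ∑ j ∈ Finset.range (n + 1), β ^ j := by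
          gcongr
          exact sum_branches_le hβ
      _ = ∑ j ∈ Finset.range (n + 2), β ^ j := by rw [Finset.sum_range_succ _ (n + 1)]; ring

lemma Tbeta_iterate_eq_of_mem_branches (hβ : 0 < β) (hp : p ∈ branches β n) {y : ℝ}
    (hy : y ∈ Ico p.1 p.2) : (Tbeta β)^[n] y = β ^ n * (y - p.1) := by
  induction n generalizing p with
  | zero => obtain rfl := Finset.mem_singleton.1 hp; simp
  | succ n ih =>
    obtain ⟨p', hp', hp⟩ := mem_branches_succ.1 hp
    have hc : 0 < β ^ (n + 1) := by positivity
    obtain ⟨m, h1, -, h2⟩ := exists_eq_of_mem_subdivide hc hp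
    have hy₂ : y < p.1 + 1 / β ^ (n + 1) := h2 ▸ hy.2 |>.trans_le (min_le_left _ _)
    rw [Function.iterate_succ_apply', ih hp' (Ico_subset_of_mem_subdivide hc hp hy)]
    -- `T_β = Int.fract (β * ·)`, and `β^(n+1) (p.1 - p'.1) = m` is an integer
    refine Int.fract_eq_iff.2 ⟨?_, ?_, m, ?_⟩
    · exact mul_nonneg hc.le (sub_nonneg.2 hy.1)
    · exact (lt_div_iff₀' hc).1 (by linarith)
    · rw [h1, Int.cast_natCast]; field_simp; ring

end Branches

section Measure

variable {β : ℝ}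

lemma volume_abs_iterate_sub_lt_le_card (hβ : 1 < β) {n : ℕ} (hn : n ≠ 0) (ε : ℝ) :
    volume {x ∈ Ico (0 : ℝ) 1 | |(Tbeta β)^[n] x - x| < ε} ≤
      (branches β n).card * ENNReal.ofReal (2 * (ε / (β ^ n - 1))) := by
  have hβ₀ : 0 < β := by linarith
  have hd : 0 < β ^ n - 1 := sub_pos.2 (one_lt_pow₀ hβ hn)
  have hsub : {x ∈ Ico (0 : ℝ) 1 | |(Tbeta β)^[n] x - x| < ε} ⊆
      ⋃ p ∈ branches β n, Metric.ball (β ^ n * p.1 / (β ^ n - 1)) (ε / (β ^ n - 1)) := by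
    rintro x ⟨hx, hε⟩
    obtain ⟨p, hp, hxp⟩ := exists_mem_branches hβ₀ hx
    rw [Tbeta_iterate_eq_of_mem_branches hβ₀ hp hxp] at hε
    refine mem_iUnion₂.2 ⟨p, hp, ?_⟩
    have hcentre : x - β ^ n * p.1 / (β ^ n - 1) = (β ^ n * (x - p.1) - x) / (β ^ n - 1) := by
      field_simp
      ring
    rw [Metric.mem_ball, Real.dist_eq, hcentre, abs_div, abs_of_pos hd]
    exact div_lt_div_of_pos_right hε hd
  calc volume {x ∈ Ico (0 : ℝ) 1 | |(Tbeta β)^[n] x - x| < ε}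
      ≤ ∑ p ∈ branches β n, volume (Metric.ball (β ^ n * p.1 / (β ^ n - 1)) (ε / (β ^ n - 1))) :=
        (measure_mono hsub).trans (measure_biUnion_finset_le _ _)
    _ = (branches β n).card * ENNReal.ofReal (2 * (ε / (β ^ n - 1))) := by
        simp only [Real.volume_ball, Finset.sum_const, nsmul_eq_mul]

lemma card_branches_div_le (hβ : 1 < β) {n : ℕ} (hn : n ≠ 0) :
    (branches β n).card / (β ^ n - 1) ≤ (β / (β - 1)) ^ 2 := by
  have hβ₁ : 0 < β - 1 := by linarith
  have hd : 0 < β ^ n - 1 := sub_pos.2 (one_lt_pow₀ hβ hn)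
  have hβn : β ≤ β ^ n := le_self_pow₀ hβ.le hn
  have hcard : ((branches β n).card : ℝ) ≤ β ^ (n + 1) / (β - 1) := by
    refine (card_branches_le (by linarith)).trans ?_
    rw [geom_sum_eq hβ.ne', div_le_div_iff_of_pos_right hβ₁]
    linarith
  rw [div_le_iff₀ hd]
  refine hcard.trans ?_
  rw [div_le_iff₀ hβ₁, pow_succ]
  field_simp
  nlinarith

lemma volume_abs_iterate_sub_lt_le (hβ : 1 < β) {n : ℕ} (hn : n ≠ 0) {ε : ℝ} (hε : 0 ≤ ε) :
    volume {x ∈ Ico (0 : ℝ) 1 | |(Tbeta β)^[n] x - x| < ε} ≤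
      ENNReal.ofReal (2 * (β / (β - 1)) ^ 2 * ε) := by
  have hd : 0 < β ^ n - 1 := sub_pos.2 (one_lt_pow₀ hβ hn)
  refine (volume_abs_iterate_sub_lt_le_card hβ hn ε).trans ?_
  rw [← ENNReal.ofReal_natCast, ← ENNReal.ofReal_mul (by positivity)]
  refine ENNReal.ofReal_le_ofReal ?_
  calc ((branches β n).card : ℝ) * (2 * (ε / (β ^ n - 1)))
      = 2 * ((branches β n).card / (β ^ n - 1)) * ε := by ring
    _ ≤ 2 * (β / (β - 1)) ^ 2 * ε := by gcongr; exact card_branches_div_le hβ hn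

end Measure

lemma volume_setOf_frequently_abs_iterate_sub_lt_eq_zero {β r : ℝ} (hβ : 1 < β) (hr : 0 < r) :
    volume {x ∈ Ico (0 : ℝ) 1 |
      ∃ᶠ n : ℕ in atTop, |(Tbeta β)^[n] x - x| < β ^ (-(r * n))} = 0 := by
  set a := β ^ (-r)
  have ha₀ : 0 < a := Real.rpow_pos_of_pos (by linarith) _
  have ha₁ : a < 1 := Real.rpow_lt_one_of_one_lt_of_neg hβ (neg_lt_zero.2 hr)
  set C := 2 * (β / (β - 1)) ^ 2
  have hC : 1 ≤ C := by
    have : 1 ≤ β / (β - 1) := (one_le_div (by linarith)).2 (by linarith)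
    nlinarith [one_le_pow₀ (n := 2) this]
  have hbound (n : ℕ) : volume {x | x ∈ Ico (0 : ℝ) 1 ∧ |(Tbeta β)^[n] x - x| < a ^ n} ≤
      ENNReal.ofReal (C * a ^ n) := by
    rcases eq_or_ne n 0 with rfl | hn
    · calc volume {x | x ∈ Ico (0 : ℝ) 1 ∧ _} ≤ volume (Ico (0 : ℝ) 1) :=
            measure_mono fun x hx => hx.1
        _ ≤ ENNReal.ofReal (C * a ^ 0) := by simpa using hC
    · exact volume_abs_iterate_sub_lt_le hβ hn (pow_nonneg ha₀.le n)
  have hsum : ∑' n, ENNReal.ofReal (C * a ^ n) ≠ ⊤ := by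
    rw [← ENNReal.ofReal_tsum_of_nonneg (fun n => by positivity)
      ((summable_geometric_of_lt_one ha₀.le ha₁).mul_left C)]
    exact ENNReal.ofReal_ne_top
  refine measure_mono_null (fun x ⟨hx, hfreq⟩ => ?_)
    (measure_setOfPred_frequently_eq_zero (ne_top_of_le_ne_top hsum (ENNReal.tsum_le_tsum hbound)))
  simp only [Real.rpow_neg_mul_natCast (by linarith : 0 ≤ β)] at hfreq
  exact hfreq.mono fun n hn => ⟨hx, hn⟩

lemma exists_pos_of_rHatBeta_ne_zero {β x : ℝ} (h : rHatBeta β x ≠ 0) :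
    ∃ r > 0, ∀ᶠ N : ℕ in atTop, ∃ n : ℕ, 1 ≤ n ∧ n ≤ N ∧
      |(Tbeta β)^[n] x - x| < β ^ (-(r * (N : ℝ))) := by
  simp only [rHatBeta, ne_eq, ENNReal.iSup_eq_zero, not_forall, ENNReal.ofReal_eq_zero,
    not_le] at h
  obtain ⟨r, ⟨-, hN⟩, hr⟩ := h
  exact ⟨r, hr, hN⟩

lemma frequently_abs_iterate_sub_lt_of_eventually {β x q r : ℝ} (hβ : 1 < β) (hq : 0 < q)
    (hqr : q ≤ r) (h : ∀ᶠ N : ℕ in atTop, ∃ n : ℕ, 1 ≤ n ∧ n ≤ N ∧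
      |(Tbeta β)^[n] x - x| < β ^ (-(r * (N : ℝ)))) :
    ∃ᶠ n : ℕ in atTop, |(Tbeta β)^[n] x - x| < β ^ (-(q * (n : ℝ))) := by
  have hle : β ^ (-r) ≤ β ^ (-q) := Real.rpow_le_rpow_of_exponent_le hβ.le (by linarith)
  simp only [Real.rpow_neg_mul_natCast (by linarith : 0 ≤ β), ← Real.dist_eq] at h ⊢
  refine Function.frequently_dist_iterate_lt_pow_of_eventually
    (Real.rpow_pos_of_pos (by linarith) _) (Real.rpow_lt_one_of_one_lt_of_neg hβ (neg_lt_zero.2 hq)) (h.mono fun N hN => ?_)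
  obtain ⟨n, hn₁, hnN, hlt⟩ := hN
  exact ⟨n, hn₁, hnN, hlt.trans_le (by gcongr)⟩

theorem full_measure_rHat_zero (β : ℝ) (hβ : 1 < β) :
    volume {x ∈ Set.Ico (0 : ℝ) 1 | rHatBeta β x ≠ 0} = 0 := by
  have hsub : {x ∈ Set.Ico (0 : ℝ) 1 | rHatBeta β x ≠ 0} ⊆ ⋃ k : ℕ, {x ∈ Ico (0 : ℝ) 1 |
      ∃ᶠ n : ℕ in atTop, |(Tbeta β)^[n] x - x| < β ^ (-(1 / ((k : ℝ) + 1) * n))} := by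
    rintro x ⟨hx, hxr⟩
    obtain ⟨r, hr, hN⟩ := exists_pos_of_rHatBeta_ne_zero hxr
    obtain ⟨k, hk⟩ := exists_nat_one_div_lt hr
    exact mem_iUnion.2 ⟨k, hx, frequently_abs_iterate_sub_lt_of_eventually hβ
      Nat.one_div_pos_of_nat hk.le hN⟩
  exact measure_mono_null hsub (measure_iUnion_null fun k =>
    volume_setOf_frequently_abs_iterate_sub_lt_eq_zero hβ Nat.one_div_pos_of_nat)
end

section
/- Let β > 1 be real. The set { x ∈ [0,1) : r_β(x) = +∞ } has Hausdorff dimension 0; consequently, for every r̂ ∈ [0,1], the set R_β(r̂, +∞) has Hausdorff dimension 0. -/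
/-!
If `r_β(x) = ∞`, then for every `θ > 0` there are infinitely many `n` with
`|T_β^n x - x| < θ^n`. Since `T_β^n x = β^n x - ∑_{i<n} c_i β^i` with digits `c_i ≤ ⌊β⌋`,
each such `n` puts `x` within `θ^n / (β - 1)` of one of the at most `(⌊β⌋ + 1)^n` points
`∑ c_i β^i / (β^n - 1)`. Taking `θ` with `(⌊β⌋ + 1) θ^d < 1`, these balls have summable
`d`-th powers of diameters, so by the Hausdorff–Cantelli lemma the set has `μH[d]`-measure
zero for every `d > 0`.
-/

open Set Filter MeasureTheory
open scoped ENNReal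

open scoped Topology
open Metric

theorem hausdorffMeasure_limsup_iUnion_eq_zero {X : Type*} [EMetricSpace X] [MeasurableSpace X]
    [BorelSpace X] {ι : ℕ → Type*} [∀ n, Countable (ι n)] {d : ℝ} (hd : 0 < d)
    (t : ∀ n, ι n → Set X) (ht : ∑' n, ∑' i, ediam (t n i) ^ d ≠ ∞) :
    μH[d] (limsup (fun n ↦ ⋃ i, t n i) atTop) = 0 := by
  set tail : ℕ → ℝ≥0∞ := fun N ↦ ∑' k, ∑' i, ediam (t (k + N) i) ^ d
  have htail : Tendsto tail atTop (𝓝 0) := ENNReal.tendsto_sum_nat_add _ ht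
  have hdiam (N k : ℕ) (i : ι (k + N)) : ediam (t (k + N) i) ≤ tail N ^ d⁻¹ :=
    (ENNReal.le_rpow_inv_iff hd).2 <|
      (ENNReal.le_tsum (f := fun i ↦ ediam (t (k + N) i) ^ d) i).trans
        (ENNReal.le_tsum (f := fun k ↦ ∑' i, ediam (t (k + N) i) ^ d) k)
  have hcover (N : ℕ) : limsup (fun n ↦ ⋃ i, t n i) atTop ⊆
      ⋃ p : Σ k, ι (k + N), t (p.1 + N) p.2 := by
    intro x hx
    obtain ⟨n, hnN, hxn⟩ := frequently_atTop.1 (mem_limsup_iff_frequently_mem.1 hx) N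
    obtain ⟨k, rfl⟩ := Nat.exists_eq_add_of_le' hnN
    obtain ⟨i, hi⟩ := mem_iUnion.1 hxn
    exact mem_iUnion.2 ⟨⟨k, i⟩, hi⟩
  have hradius : Tendsto (fun N ↦ tail N ^ d⁻¹) atTop (𝓝 0) := by
    have := ((ENNReal.continuous_rpow_const (y := d⁻¹)).tendsto 0).comp htail
    rwa [ENNReal.zero_rpow_of_pos (inv_pos.2 hd)] at this
  refine nonpos_iff_eq_zero.1 <| (Measure.hausdorffMeasure_le_liminf_tsum d _ _ hradius
    (fun N (p : Σ k, ι (k + N)) ↦ t (p.1 + N) p.2) (.of_forall fun N p ↦ hdiam N p.1 p.2)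
    (.of_forall hcover)).trans_eq ?_
  simpa only [ENNReal.tsum_sigma'] using htail.liminf_eq

theorem tsum_tsum_ediam_closedEBall_rpow_ne_top {X : Type*} [PseudoEMetricSpace X] {K : ℕ}
    {d : ℝ} (hd : 0 ≤ d) {a θ : ℝ≥0∞} (ha : a ≠ ∞) (hθ : K * θ ^ d < 1)
    (f : ∀ n, (Fin n → Fin K) → X) :
    ∑' n, ∑' c, ediam (closedEBall (f n c) (a * θ ^ n)) ^ d ≠ ∞ := by
  have hterm (n : ℕ) (c : Fin n → Fin K) :
      ediam (closedEBall (f n c) (a * θ ^ n)) ^ d ≤ (2 * a) ^ d * (θ ^ d) ^ n :=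
    calc ediam (closedEBall (f n c) (a * θ ^ n)) ^ d
        ≤ (2 * a * θ ^ n) ^ d := by
          rw [mul_assoc]; exact ENNReal.rpow_le_rpow ediam_closedEBall_le hd
      _ = (2 * a) ^ d * (θ ^ d) ^ n := by
          rw [ENNReal.mul_rpow_of_nonneg _ _ hd, ← ENNReal.rpow_natCast, ← ENNReal.rpow_natCast,
            ← ENNReal.rpow_mul, ← ENNReal.rpow_mul, mul_comm (n : ℝ)]
  have hsum : ∑' n, ∑' c, ediam (closedEBall (f n c) (a * θ ^ n)) ^ d ≤
      (2 * a) ^ d * (1 - K * θ ^ d)⁻¹ := calc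
    ∑' n, ∑' c, ediam (closedEBall (f n c) (a * θ ^ n)) ^ d
      ≤ ∑' n : ℕ, ∑' _ : Fin n → Fin K, (2 * a) ^ d * (θ ^ d) ^ n :=
        ENNReal.tsum_le_tsum fun n ↦ ENNReal.tsum_le_tsum (hterm n)
    _ = (2 * a) ^ d * (1 - K * θ ^ d)⁻¹ := by
        simp only [tsum_fintype, Finset.sum_const, Finset.card_univ, Fintype.card_fun,
          Fintype.card_fin, nsmul_eq_mul, Nat.cast_pow]
        simp_rw [mul_left_comm _ ((2 * a) ^ d), ← mul_pow]
        rw [ENNReal.tsum_mul_left, ENNReal.tsum_geometric]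
  have hfactor : (2 * a) ^ d ≠ ∞ :=
    ENNReal.rpow_ne_top_of_nonneg hd (ENNReal.mul_ne_top ENNReal.ofNat_ne_top ha)
  exact ne_top_of_le_ne_top
    (ENNReal.mul_ne_top hfactor (ENNReal.inv_ne_top.2 (tsub_pos_of_lt hθ).ne')) hsum

theorem dimH_eq_zero_of_forall_hausdorffMeasure_eq_zero {X : Type*} [EMetricSpace X]
    [MeasurableSpace X] [BorelSpace X] {s : Set X} (h : ∀ d : ℝ, 0 < d → μH[d] s = 0) :
    dimH s = 0 :=
  nonpos_iff_eq_zero.1 <| ENNReal.le_of_forall_pos_le_add fun ε hε _ ↦ by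
    simpa using dimH_le_of_hausdorffMeasure_ne_top ((h ε hε).trans_ne ENNReal.zero_ne_top)

lemma exists_pos_mul_rpow_lt_one (K : ℝ) {d : ℝ} (hd : 0 < d) : ∃ θ > 0, K * θ ^ d < 1 := by
  refine ⟨(|K| + 1) ^ (-d⁻¹), by positivity, ?_⟩
  rw [← Real.rpow_mul (by positivity), neg_mul, inv_mul_cancel₀ hd.ne', Real.rpow_neg_one,
    ← div_eq_mul_inv, div_lt_one (by positivity)]
  linarith [le_abs_self K]

open Metric in
def digitSum (β : ℝ) {n K : ℕ} (c : Fin n → Fin K) : ℝ :=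
  ∑ i, ((c i : ℕ) : ℝ) * β ^ (i : ℕ)

lemma digitSum_cons (β : ℝ) {n K : ℕ} (k : Fin K) (c : Fin n → Fin K) :
    digitSum β (Fin.cons k c : Fin (n + 1) → Fin K) = k + β * digitSum β c := by
  simp only [digitSum, Fin.sum_univ_succ, Fin.cons_zero, Fin.cons_succ, Fin.val_succ,
    Fin.val_zero, pow_zero, mul_one, pow_succ, Finset.mul_sum]
  congr 1
  exact Finset.sum_congr rfl fun i _ ↦ by ring

lemma Tbeta_mem_Ico (β x : ℝ) : Tbeta β x ∈ Ico 0 1 :=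
  ⟨sub_nonneg.2 (Int.floor_le _), sub_lt_iff_lt_add'.2 (Int.lt_floor_add_one _)⟩

lemma Tbeta_iterate_mem_Ico (β : ℝ) {x : ℝ} (hx : x ∈ Ico 0 1) (n : ℕ) :
    (Tbeta β)^[n] x ∈ Ico 0 1 := by
  cases n with
  | zero => exact hx
  | succ n => rw [Function.iterate_succ_apply']; exact Tbeta_mem_Ico β _

lemma exists_digit_Tbeta_eq {β y : ℝ} (hβ : 0 < β) (hy : y ∈ Ico 0 1) :
    ∃ k : Fin (⌊β⌋₊ + 1), Tbeta β y = β * y - k := by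
  have hβy : 0 ≤ β * y := mul_nonneg hβ.le hy.1
  have hk : ⌊β * y⌋₊ < ⌊β⌋₊ + 1 :=
    Nat.lt_succ_of_le <| Nat.floor_le_floor <| mul_le_of_le_one_right hβ.le hy.2.le
  refine ⟨⟨⌊β * y⌋₊, hk⟩, ?_⟩
  rw [Tbeta, Fin.val_mk, natCast_floor_eq_intCast_floor hβy]

lemma exists_digits_Tbeta_iterate_eq {β x : ℝ} (hβ : 0 < β) (hx : x ∈ Ico 0 1) (n : ℕ) :
    ∃ c : Fin n → Fin (⌊β⌋₊ + 1), (Tbeta β)^[n] x = β ^ n * x - digitSum β c := by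
  induction n with
  | zero => exact ⟨Fin.elim0, by simp [digitSum]⟩
  | succ n ih =>
    obtain ⟨c, hc⟩ := ih
    obtain ⟨k, hk⟩ := exists_digit_Tbeta_eq hβ (Tbeta_iterate_mem_Ico β hx n)
    refine ⟨Fin.cons k c, ?_⟩
    rw [Function.iterate_succ_apply', hk, hc, digitSum_cons]
    ring

lemma exists_digits_dist_lt_of_abs_Tbeta_iterate_sub_lt {β x ε : ℝ} (hβ : 1 < β)
    (hx : x ∈ Ico 0 1) {n : ℕ} (hn : 1 ≤ n) (h : |(Tbeta β)^[n] x - x| < ε) :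
    ∃ c : Fin n → Fin (⌊β⌋₊ + 1),
      dist x (digitSum β c / (β ^ n - 1)) < ε / (β - 1) := by
  obtain ⟨c, hc⟩ := exists_digits_Tbeta_iterate_eq (zero_lt_one.trans hβ) hx n
  have hβn : β - 1 ≤ β ^ n - 1 := sub_le_sub_right (le_self_pow₀ hβ.le (by omega)) 1
  have hβ1 : 0 < β - 1 := sub_pos.2 hβ
  have hβn1 : 0 < β ^ n - 1 := hβ1.trans_le hβn
  refine ⟨c, ?_⟩
  have hdist : x - digitSum β c / (β ^ n - 1) = ((Tbeta β)^[n] x - x) / (β ^ n - 1) := by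
    rw [hc]; field_simp; ring
  rw [Real.dist_eq, hdist, abs_div, abs_of_pos hβn1]
  exact (div_le_div_of_nonneg_left (abs_nonneg _) hβ1 hβn).trans_lt
    (div_lt_div_of_pos_right h hβ1)

lemma frequently_abs_Tbeta_iterate_sub_lt_pow {β x θ : ℝ} (hβ : 1 < β) (hx : rBeta β x = ⊤)
    (hθ : 0 < θ) : ∃ᶠ n in atTop, |(Tbeta β)^[n] x - x| < θ ^ n := by
  have hβ0 : 0 < β := zero_lt_one.trans hβ
  obtain ⟨r, ⟨-, hfreq⟩, hr⟩ :=
    lt_biSup_iff.1 (hx ▸ ENNReal.ofReal_lt_top : ENNReal.ofReal (-Real.logb β θ) < rBeta β x)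
  have hr : -Real.logb β θ < r := (ENNReal.ofReal_lt_ofReal_iff'.1 hr).1
  refine hfreq.mono fun n hn ↦ hn.trans_le ?_
  rw [← Real.rpow_logb hβ0 hβ.ne' hθ, ← Real.rpow_natCast, ← Real.rpow_mul hβ0.le]
  exact Real.rpow_le_rpow_of_exponent_le hβ.le (by nlinarith [(n.cast_nonneg : (0 : ℝ) ≤ n)])

lemma setOf_rBeta_eq_top_subset_limsup {β θ : ℝ} (hβ : 1 < β) (hθ : 0 < θ) :
    {x ∈ Ico 0 1 | rBeta β x = ⊤} ⊆
      limsup (fun n ↦ ⋃ c : Fin n → Fin (⌊β⌋₊ + 1),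
        closedEBall (digitSum β c / (β ^ n - 1))
          (ENNReal.ofReal (β - 1)⁻¹ * ENNReal.ofReal θ ^ n)) atTop := by
  rintro x ⟨hx, htop⟩
  refine mem_limsup_iff_frequently_mem.2 <|
    ((frequently_abs_Tbeta_iterate_sub_lt_pow hβ htop hθ).and_eventually
      (eventually_ge_atTop 1)).mono fun n ⟨hlt, hn⟩ ↦ ?_
  obtain ⟨c, hc⟩ := exists_digits_dist_lt_of_abs_Tbeta_iterate_sub_lt hβ hx hn hlt
  refine mem_iUnion.2 ⟨c, ?_⟩
  have hβ1 : 0 < β - 1 := sub_pos.2 hβ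
  rw [mem_closedEBall, ← ENNReal.ofReal_pow hθ.le, ← ENNReal.ofReal_mul (by positivity),
    edist_le_ofReal (by positivity), inv_mul_eq_div]
  exact hc.le

theorem hausdorffMeasure_setOf_rBeta_eq_top {β d : ℝ} (hβ : 1 < β) (hd : 0 < d) :
    μH[d] {x ∈ Ico 0 1 | rBeta β x = ⊤} = 0 := by
  obtain ⟨θ, hθ, hKθ⟩ := exists_pos_mul_rpow_lt_one (⌊β⌋₊ + 1 : ℕ) hd
  have hKθ' : ((⌊β⌋₊ + 1 : ℕ) : ℝ≥0∞) * ENNReal.ofReal θ ^ d < 1 := by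
    rwa [ENNReal.ofReal_rpow_of_nonneg hθ.le hd.le, ← ENNReal.ofReal_natCast,
      ← ENNReal.ofReal_mul (by positivity), ENNReal.ofReal_lt_one]
  exact measure_mono_null (setOf_rBeta_eq_top_subset_limsup hβ hθ) <|
    hausdorffMeasure_limsup_iUnion_eq_zero hd _ <|
      tsum_tsum_ediam_closedEBall_rpow_ne_top hd.le ENNReal.ofReal_ne_top hKθ' _

theorem dimH_rBeta_top_eq_zero (β : ℝ) (hβ : 1 < β) :
    dimH {x ∈ Set.Ico (0 : ℝ) 1 | rBeta β x = ⊤} = 0 ∧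
    ∀ rhat : ℝ, 0 ≤ rhat → rhat ≤ 1 →
      dimH {x ∈ Set.Ico (0 : ℝ) 1 |
        rHatBeta β x = ENNReal.ofReal rhat ∧ rBeta β x = ⊤} = 0 := by
  have htop : dimH {x ∈ Set.Ico (0 : ℝ) 1 | rBeta β x = ⊤} = 0 :=
    dimH_eq_zero_of_forall_hausdorffMeasure_eq_zero fun _ hd ↦
      hausdorffMeasure_setOf_rBeta_eq_top hβ hd
  refine ⟨htop, fun rhat _ _ ↦ nonpos_iff_eq_zero.1 ?_⟩
  exact htop ▸ dimH_mono fun x hx ↦ ⟨hx.1, hx.2.2⟩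
end

section
/- Let β > 1 be real and let x ∈ [0,1) be such that r_β(x) > 0 and the digit sequence (ε_n(x,β))_{n≥1} is not periodic (there is no p ≥ 1 with ε_{n+p}(x,β) = ε_n(x,β) for all n ≥ 1). Then there exist strictly increasing sequences of positive integers (n_k)_{k≥1} and (m_k)_{k≥1} with n_k ≤ m_k for all k, such that β^{−(m_k−n_k)−1} ≤ |T_β^{n_k} x − x| < β^{−(m_k−n_k)} for all k, r_β(x) = limsup_{k→∞} (m_k − n_k)/n_k, and r̂_β(x) = liminf_{k→∞} (m_k − n_k)/n_{k+1}. -/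
open Set Filter MeasureTheory
open scoped ENNReal

/-- The `n`-th digit `ε_n(x,β) = ⌊β T_β^{n-1} x⌋` of the β-expansion (for `n ≥ 1`). -/
noncomputable def epsDigit (β : ℝ) (x : ℝ) (n : ℕ) : ℤ := ⌊β * (Tbeta β)^[n - 1] x⌋

/-- The integer `d` with `β^{-(d+1)} ≤ |T^j x - x| < β^{-d}`. -/
noncomputable def dExp (β x : ℝ) (j : ℕ) : ℕ :=
  (⌈Real.logb β (|(Tbeta β)^[j] x - x|)⁻¹⌉ - 1).toNat

/-- Next record time after `a`. -/
noncomputable def nextRec (β x : ℝ) (a : ℕ) : ℕ :=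
  sInf {n : ℕ | a < n ∧ dExp β x a < dExp β x n}

/-- The sequence of record times, starting at `1`. -/
noncomputable def recTimes (β x : ℝ) (k : ℕ) : ℕ := (nextRec β x)^[k] 1

lemma Tbeta_iter_mem (β x : ℝ) (hx : x ∈ Set.Ico (0:ℝ) 1) (j : ℕ) :
    (Tbeta β)^[j] x ∈ Set.Ico (0:ℝ) 1 := by
  induction j with
  | zero => exact hx
  | succ j ih =>
    rw [Function.iterate_succ_apply']
    have h : Tbeta β ((Tbeta β)^[j] x) = Int.fract (β * (Tbeta β)^[j] x) := rfl
    rw [h]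
    exact ⟨Int.fract_nonneg _, Int.fract_lt_one _⟩

lemma dExp_bracket {β x : ℝ} (hβ : 1 < β) (hx : x ∈ Set.Ico (0:ℝ) 1) {j : ℕ}
    (hne : (Tbeta β)^[j] x ≠ x) :
    β ^ (-(dExp β x j : ℝ) - 1) ≤ |(Tbeta β)^[j] x - x| ∧
      |(Tbeta β)^[j] x - x| < β ^ (-(dExp β x j : ℝ)) := by
  have hβ0 : (0:ℝ) < β := lt_trans one_pos hβ
  have hmem := Tbeta_iter_mem β x hx j
  set δ := |(Tbeta β)^[j] x - x| with hδdef
  have hδ0 : 0 < δ := abs_pos.mpr (sub_ne_zero.mpr hne)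
  have hδ1 : δ < 1 := by
    rw [hδdef, abs_sub_lt_iff]
    exact ⟨by linarith [hmem.2, hx.1], by linarith [hmem.1, hx.2]⟩
  set L := Real.logb β δ⁻¹ with hLdef
  have hL0 : 0 < L := Real.logb_pos hβ ((one_lt_inv₀ hδ0).mpr hδ1)
  have hrL : β ^ L = δ⁻¹ := Real.rpow_logb hβ0 (ne_of_gt hβ) (inv_pos.mpr hδ0)
  have hδL : δ = β ^ (-L) := by rw [Real.rpow_neg hβ0.le, hrL, inv_inv]
  have hd : dExp β x j = (⌈L⌉ - 1).toNat := by
    unfold dExp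
    rw [← hδdef, ← hLdef]
  have hceil : 1 ≤ ⌈L⌉ := Int.ceil_pos.mpr hL0
  have hcast : (dExp β x j : ℝ) = (⌈L⌉ : ℝ) - 1 := by
    rw [hd]
    have h1 : ((⌈L⌉ - 1).toNat : ℤ) = ⌈L⌉ - 1 := Int.toNat_of_nonneg (by omega)
    exact_mod_cast h1
  have h1 : (dExp β x j : ℝ) < L := by
    have := Int.ceil_lt_add_one L
    rw [hcast]; linarith
  have h2 : L ≤ (dExp β x j : ℝ) + 1 := by
    have := Int.le_ceil L
    rw [hcast]; linarith
  constructor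
  · rw [hδL, Real.rpow_le_rpow_left_iff hβ]
    linarith
  · rw [hδL, Real.rpow_lt_rpow_left_iff hβ]
    linarith

lemma iterate_ne_of_not_periodic {β x : ℝ}
    (hnp : ¬ ∃ p : ℕ, 1 ≤ p ∧ ∀ i : ℕ, 1 ≤ i → epsDigit β x (i + p) = epsDigit β x i)
    {p : ℕ} (hp : 1 ≤ p) : (Tbeta β)^[p] x ≠ x := by
  intro h
  refine hnp ⟨p, hp, fun i hi => ?_⟩
  unfold epsDigit
  have h1 : i + p - 1 = (i - 1) + p := by omega
  rw [h1, Function.iterate_add_apply, h]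

lemma nextRec_spec {β x : ℝ} (hub : ∀ B : ℕ, ∃ j : ℕ, 1 ≤ j ∧ B < dExp β x j)
    (a : ℕ) : a < nextRec β x a ∧ dExp β x a < dExp β x (nextRec β x a) := by
  have hne : {n : ℕ | a < n ∧ dExp β x a < dExp β x n}.Nonempty := by
    obtain ⟨j, hj1, hjB⟩ := hub ((Finset.range (a+1)).sup (dExp β x))
    refine ⟨j, ?_, ?_⟩
    · by_contra hja
      push_neg at hja
      have h := Finset.le_sup (s := Finset.range (a+1)) (f := dExp β x)
        (Finset.mem_range.mpr (by omega : j < a + 1))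
      omega
    · exact lt_of_le_of_lt
        (Finset.le_sup (s := Finset.range (a+1)) (f := dExp β x)
          (Finset.mem_range.mpr (by omega : a < a + 1))) hjB
  exact Nat.sInf_mem hne

lemma nextRec_min {β x : ℝ} {a m : ℕ} (h1 : a < m) (h2 : m < nextRec β x a) :
    dExp β x m ≤ dExp β x a := by
  unfold nextRec at h2
  have h3 := Nat.notMem_of_lt_sInf h2
  simp only [Set.mem_setOf_eq, not_and, not_lt] at h3
  exact h3 h1

lemma recTimes_zero (β x : ℝ) : recTimes β x 0 = 1 := rfl

lemma recTimes_succ (β x : ℝ) (k : ℕ) :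
    recTimes β x (k+1) = nextRec β x (recTimes β x k) :=
  Function.iterate_succ_apply' _ _ _

lemma recTimes_strict {β x : ℝ} (hub : ∀ B : ℕ, ∃ j : ℕ, 1 ≤ j ∧ B < dExp β x j) (k : ℕ) :
    recTimes β x k < recTimes β x (k+1) ∧
      dExp β x (recTimes β x k) < dExp β x (recTimes β x (k+1)) := by
  rw [recTimes_succ]; exact nextRec_spec hub _

lemma recTimes_mono {β x : ℝ} (hub : ∀ B : ℕ, ∃ j : ℕ, 1 ≤ j ∧ B < dExp β x j) :
    StrictMono (recTimes β x) :=
  strictMono_nat_of_lt_succ fun k => (recTimes_strict hub k).1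

lemma recTimes_ge {β x : ℝ} (hub : ∀ B : ℕ, ∃ j : ℕ, 1 ≤ j ∧ B < dExp β x j) (k : ℕ) :
    k + 1 ≤ recTimes β x k := by
  induction k with
  | zero => simp [recTimes_zero]
  | succ k ih =>
    have := (recTimes_strict hub k).1
    omega

lemma recTimes_max {β x : ℝ} (hub : ∀ B : ℕ, ∃ j : ℕ, 1 ≤ j ∧ B < dExp β x j) :
    ∀ k, ∀ j : ℕ, 1 ≤ j → j < recTimes β x (k+1) →
      dExp β x j ≤ dExp β x (recTimes β x k) := by
  intro k
  induction k with
  | zero =>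
    intro j hj1 hj2
    rcases eq_or_lt_of_le hj1 with h | h
    · rw [recTimes_zero, ← h]
    · rw [recTimes_zero]
      refine nextRec_min (a := 1) h ?_
      rw [recTimes_succ, recTimes_zero] at hj2
      exact hj2
  | succ k ih =>
    intro j hj1 hj2
    rcases lt_trichotomy j (recTimes β x (k+1)) with h | h | h
    · exact le_trans (ih j hj1 h) (recTimes_strict hub k).2.le
    · rw [h]
    · refine nextRec_min h ?_
      rw [recTimes_succ] at hj2
      exact hj2

lemma recTimes_interval {β x : ℝ} (hub : ∀ B : ℕ, ∃ j : ℕ, 1 ≤ j ∧ B < dExp β x j)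
    {N : ℕ} (hN : 1 ≤ N) :
    ∃ k, recTimes β x k ≤ N ∧ N < recTimes β x (k+1) := by
  have hne : {k : ℕ | N < recTimes β x k}.Nonempty :=
    ⟨N, by have := recTimes_ge hub N; simpa using by omega⟩
  have hmem : N < recTimes β x (sInf {k : ℕ | N < recTimes β x k}) := Nat.sInf_mem hne
  set k0 := sInf {k : ℕ | N < recTimes β x k} with hk0
  have hk0pos : k0 ≠ 0 := by
    intro h
    rw [h, recTimes_zero] at hmem; omega
  have hnotmem : (k0 - 1) ∉ {k : ℕ | N < recTimes β x k} := by
    rw [hk0]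
    exact Nat.notMem_of_lt_sInf (by omega)
  simp only [Set.mem_setOf_eq, not_lt] at hnotmem
  refine ⟨k0 - 1, hnotmem, ?_⟩
  have h : k0 - 1 + 1 = k0 := by omega
  rw [h]; exact hmem

theorem exists_recurrence_sequences (β : ℝ) (hβ : 1 < β) (x : ℝ)
    (hx : x ∈ Set.Ico (0 : ℝ) 1) (hr : 0 < rBeta β x)
    (hnp : ¬ ∃ p : ℕ, 1 ≤ p ∧ ∀ i : ℕ, 1 ≤ i → epsDigit β x (i + p) = epsDigit β x i) :
    ∃ n m : ℕ → ℕ, StrictMono n ∧ StrictMono m ∧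
      (∀ k, 1 ≤ n k ∧ n k ≤ m k) ∧
      (∀ k, β ^ (-((m k : ℝ) - (n k : ℝ)) - 1) ≤ |(Tbeta β)^[n k] x - x| ∧
            |(Tbeta β)^[n k] x - x| < β ^ (-((m k : ℝ) - (n k : ℝ)))) ∧
      rBeta β x
        = Filter.limsup (fun k => ENNReal.ofReal (((m k : ℝ) - n k) / n k)) Filter.atTop ∧
      rHatBeta β x
        = Filter.liminf (fun k => ENNReal.ofReal (((m k : ℝ) - n k) / n (k + 1)))
            Filter.atTop := by
  have hβ0 : (0:ℝ) < β := lt_trans one_pos hβ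
  -- basic abbreviations
  have hne : ∀ j : ℕ, 1 ≤ j → (Tbeta β)^[j] x ≠ x :=
    fun j hj => iterate_ne_of_not_periodic hnp hj
  have hbr : ∀ j : ℕ, 1 ≤ j →
      β ^ (-(dExp β x j : ℝ) - 1) ≤ |(Tbeta β)^[j] x - x| ∧
        |(Tbeta β)^[j] x - x| < β ^ (-(dExp β x j : ℝ)) :=
    fun j hj => dExp_bracket hβ hx (hne j hj)
  -- from a recurrence hypothesis, get a bound on dExp
  have hkey : ∀ (c : ℝ) (j : ℕ), 1 ≤ j → |(Tbeta β)^[j] x - x| < β ^ (-c) →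
      c < (dExp β x j : ℝ) + 1 := by
    intro c j hj hlt
    have h := lt_of_le_of_lt (hbr j hj).1 hlt
    rw [Real.rpow_lt_rpow_left_iff hβ] at h
    linarith
  have hkey2 : ∀ (c : ℝ) (j : ℕ), 1 ≤ j → c ≤ (dExp β x j : ℝ) →
      |(Tbeta β)^[j] x - x| < β ^ (-c) := by
    intro c j hj hc
    refine lt_of_lt_of_le (hbr j hj).2 ?_
    rw [Real.rpow_le_rpow_left_iff hβ]
    linarith
  -- unpack hr
  have hrS : ∃ t : ℝ, 0 < t ∧
      ∃ᶠ n : ℕ in atTop, |(Tbeta β)^[n] x - x| < β ^ (-(t * (n : ℝ))) := by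
    unfold rBeta at hr
    rw [lt_iSup_iff] at hr
    obtain ⟨t, ht⟩ := hr
    rw [lt_iSup_iff] at ht
    obtain ⟨htS, ht2⟩ := ht
    exact ⟨t, ENNReal.ofReal_pos.mp ht2, htS.2⟩
  -- dExp is unbounded along j ≥ 1
  have hub : ∀ B : ℕ, ∃ j : ℕ, 1 ≤ j ∧ B < dExp β x j := by
    obtain ⟨t, ht0, htf⟩ := hrS
    intro B
    obtain ⟨j, hjge, hj⟩ := (frequently_atTop.mp htf) (Nat.ceil (((B:ℝ)+1)/t) + 1)
    have hj1 : 1 ≤ j := by omega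
    refine ⟨j, hj1, ?_⟩
    have hlt := hkey (t * (j:ℝ)) j hj1 hj
    have hj2 : ((B:ℝ)+1)/t < (j:ℝ) := by
      have h1 : ((B:ℝ)+1)/t ≤ (Nat.ceil (((B:ℝ)+1)/t) : ℝ) := Nat.le_ceil _
      have h2 : ((Nat.ceil (((B:ℝ)+1)/t) : ℕ) : ℝ) < (j:ℝ) := by
        exact_mod_cast (by omega : Nat.ceil (((B:ℝ)+1)/t) < j)
      linarith
    rw [div_lt_iff₀ ht0] at hj2
    have hBj : (B:ℝ) < (dExp β x j : ℝ) := by nlinarith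
    exact_mod_cast hBj
  -- names
  set nn : ℕ → ℕ := recTimes β x with hnn
  set dd : ℕ → ℕ := dExp β x with hdd
  have hmono : StrictMono nn := recTimes_mono hub
  have hone : ∀ k, 1 ≤ nn k := fun k => le_trans (by omega) (recTimes_ge hub k)
  have hge : ∀ k, k + 1 ≤ nn k := recTimes_ge hub
  have hdmono : ∀ k, dd (nn k) < dd (nn (k+1)) := fun k => (recTimes_strict hub k).2
  have hmax : ∀ k, ∀ j : ℕ, 1 ≤ j → j < nn (k+1) → dd j ≤ dd (nn k) := recTimes_max hub
  have hinterval : ∀ N : ℕ, 1 ≤ N → ∃ k, nn k ≤ N ∧ N < nn (k+1) :=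
    fun N hN => recTimes_interval hub hN
  refine ⟨nn, fun k => nn k + dd (nn k), hmono, ?_, ?_, ?_, ?_, ?_⟩
  · -- StrictMono m
    refine strictMono_nat_of_lt_succ fun k => ?_
    have h1 := hmono (lt_add_one k)
    have h2 := hdmono k
    omega
  · exact fun k => ⟨hone k, Nat.le_add_right _ _⟩
  · -- sandwich
    intro k
    have hc : ((↑(nn k + dd (nn k)) : ℝ) - (nn k : ℝ)) = (dd (nn k) : ℝ) := by
      push_cast; ring
    rw [hc]
    exact hbr (nn k) (hone k)
  · -- rBeta = limsup
    have hfun : (fun k => ENNReal.ofReal (((↑(nn k + dd (nn k)) : ℝ) - ↑(nn k)) / ↑(nn k)))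
        = fun k => ENNReal.ofReal ((dd (nn k) : ℝ) / (nn k : ℝ)) := by
      funext k
      congr 1
      congr 1
      push_cast; ring
    rw [hfun]
    apply le_antisymm
    · -- rBeta ≤ limsup
      unfold rBeta
      refine iSup₂_le fun t ht => ?_
      obtain ⟨ht0, htf⟩ := ht
      rw [Filter.le_limsup_iff]
      intro b hb
      have hbt : b ≠ ⊤ := hb.ne_top
      have hb' : b.toReal < t := (ENNReal.lt_ofReal_iff_toReal_lt hbt).mp hb
      -- choose K0 with 1/(nn K0) < t - b.toReal
      obtain ⟨K0, hK0⟩ : ∃ K0 : ℕ, 1 / (t - b.toReal) < (nn K0 : ℝ) := by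
        refine ⟨Nat.ceil (1 / (t - b.toReal)), ?_⟩
        have h1 : (1:ℝ) / (t - b.toReal) ≤ (Nat.ceil ((1:ℝ) / (t - b.toReal)) : ℝ) :=
          Nat.le_ceil _
        have h2 : (Nat.ceil ((1:ℝ) / (t - b.toReal)) : ℝ) <
            (nn (Nat.ceil ((1:ℝ) / (t - b.toReal))) : ℝ) := by
          exact_mod_cast (by have := hge (Nat.ceil ((1:ℝ) / (t - b.toReal))); omega)
        linarith
      rw [frequently_atTop]
      intro K
      obtain ⟨j, hjge, hj⟩ := (frequently_atTop.mp htf) (nn (max K K0))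
      have hj1 : 1 ≤ j := le_trans (hone _) hjge
      obtain ⟨k, hk1, hk2⟩ := hinterval j hj1
      have hkK : max K K0 ≤ k := by
        by_contra hc
        push_neg at hc
        have : nn (k+1) ≤ nn (max K K0) := hmono.monotone (by omega)
        omega
      refine ⟨k, le_trans (le_max_left _ _) hkK, ?_⟩
      rw [ENNReal.lt_ofReal_iff_toReal_lt hbt]
      -- show b.toReal < dd (nn k) / nn k
      have hdj : t * (j:ℝ) < (dd j : ℝ) + 1 := hkey (t * (j:ℝ)) j hj1 hj
      have hDk : (dd j : ℝ) ≤ (dd (nn k) : ℝ) := by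
        exact_mod_cast hmax k j hj1 hk2
      have hjn : (nn k : ℝ) ≤ (j : ℝ) := by exact_mod_cast hk1
      have hnkpos : (0:ℝ) < (nn k : ℝ) := by exact_mod_cast hone k
      have hnkK0 : (nn K0 : ℝ) ≤ (nn k : ℝ) := by
        exact_mod_cast hmono.monotone (le_trans (le_max_right _ _) hkK)
      have hsmall : 1 / (t - b.toReal) < (nn k : ℝ) := lt_of_lt_of_le hK0 hnkK0
      have htb : 0 < t - b.toReal := by linarith
      rw [lt_div_iff₀ hnkpos]
      -- b.toReal * nn k < dd (nn k)
      have h1 : 1 < (t - b.toReal) * (nn k : ℝ) := by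
        rw [div_lt_iff₀ htb] at hsmall
        linarith
      have h2 : t * (nn k : ℝ) ≤ t * (j : ℝ) := by
        apply mul_le_mul_of_nonneg_left hjn ht0
      nlinarith
    · -- limsup ≤ rBeta
      by_contra hcon
      push_neg at hcon
      obtain ⟨c, hc1, hc2⟩ := exists_between hcon
      have hctop : c ≠ ⊤ := hc2.ne_top
      have hfreq : ∃ᶠ k in atTop,
          c < ENNReal.ofReal ((dd (nn k) : ℝ) / (nn k : ℝ)) :=
        Filter.frequently_lt_of_lt_limsup (by isBoundedDefault) hc2
      have hmem : c.toReal ∈ {r : ℝ | 0 ≤ r ∧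
          ∃ᶠ n : ℕ in atTop, |(Tbeta β)^[n] x - x| < β ^ (-(r * (n : ℝ)))} := by
        refine ⟨ENNReal.toReal_nonneg, ?_⟩
        rw [frequently_atTop]
        intro N
        obtain ⟨k, hkN, hk⟩ := (frequently_atTop.mp hfreq) N
        refine ⟨nn k, le_trans (by have := hge k; omega) le_rfl, ?_⟩
        rw [ENNReal.lt_ofReal_iff_toReal_lt hctop] at hk
        have hnkpos : (0:ℝ) < (nn k : ℝ) := by exact_mod_cast hone k
        rw [lt_div_iff₀ hnkpos] at hk
        exact hkey2 (c.toReal * (nn k : ℝ)) (nn k) (hone k) (le_of_lt hk)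
      have : ENNReal.ofReal c.toReal ≤ rBeta β x := by
        unfold rBeta
        exact le_iSup₂ (f := fun r (_ : r ∈ _) => ENNReal.ofReal r) c.toReal hmem
      rw [ENNReal.ofReal_toReal hctop] at this
      exact absurd (lt_of_le_of_lt this hc1) (lt_irrefl c)
  · -- rHatBeta = liminf
    have hfun : (fun k => ENNReal.ofReal (((↑(nn k + dd (nn k)) : ℝ) - ↑(nn k)) / ↑(nn (k+1))))
        = fun k => ENNReal.ofReal ((dd (nn k) : ℝ) / (nn (k+1) : ℝ)) := by
      funext k
      congr 1
      congr 1
      push_cast; ring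
    rw [hfun]
    apply le_antisymm
    · -- rHatBeta ≤ liminf
      unfold rHatBeta
      refine iSup₂_le fun t ht => ?_
      obtain ⟨ht0, htev⟩ := ht
      rw [Filter.le_liminf_iff]
      intro b hb
      have hbt : b ≠ ⊤ := hb.ne_top
      have hb' : b.toReal < t := (ENNReal.lt_ofReal_iff_toReal_lt hbt).mp hb
      have htb : 0 < t - b.toReal := by linarith
      obtain ⟨N0, hN0⟩ := eventually_atTop.mp htev
      set K0 : ℕ := max N0 (Nat.ceil ((t+1) / (t - b.toReal))) with hK0def
      rw [eventually_atTop]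
      refine ⟨K0, fun k hk => ?_⟩
      -- properties of n (k+1)
      have hksucc : K0 + 1 ≤ k + 1 := by omega
      have hnk1 : (K0:ℕ) + 2 ≤ nn (k+1) := le_trans (by omega) (hge (k+1))
      have hN : N0 ≤ nn (k+1) - 1 := by omega
      have h1nk1 : 1 ≤ nn (k+1) := hone (k+1)
      obtain ⟨j, hj1, hjN, hjlt⟩ := hN0 (nn (k+1) - 1) hN
      have hcastN : ((nn (k+1) - 1 : ℕ) : ℝ) = (nn (k+1) : ℝ) - 1 := by
        have : (1:ℕ) ≤ nn (k+1) := h1nk1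
        push_cast [Nat.cast_sub this]
        ring
      have hdj : t * ((nn (k+1) : ℝ) - 1) < (dd j : ℝ) + 1 := by
        have := hkey (t * ((nn (k+1) : ℝ) - 1)) j hj1 (by rwa [hcastN] at hjlt)
        linarith [this]
      have hjlt2 : j < nn (k+1) := by omega
      have hDk : (dd j : ℝ) ≤ (dd (nn k) : ℝ) := by
        exact_mod_cast hmax k j hj1 hjlt2
      rw [ENNReal.lt_ofReal_iff_toReal_lt hbt]
      have hnpos : (0:ℝ) < (nn (k+1) : ℝ) := by exact_mod_cast h1nk1
      rw [lt_div_iff₀ hnpos]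
      -- need: b.toReal * nn(k+1) < dd (nn k)
      have hceil : (t+1) / (t - b.toReal) < (nn (k+1) : ℝ) := by
        have h1 : (t+1) / (t - b.toReal) ≤ (Nat.ceil ((t+1) / (t - b.toReal)) : ℝ) :=
          Nat.le_ceil _
        have h2 : ((Nat.ceil ((t+1) / (t - b.toReal)) : ℕ) : ℝ) < (nn (k+1) : ℝ) := by
          have : Nat.ceil ((t+1) / (t - b.toReal)) < nn (k+1) := by
            have := hge (k+1)
            omega
          exact_mod_cast this
        linarith
      rw [div_lt_iff₀ htb] at hceil
      nlinarith
    · -- liminf ≤ rHatBeta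
      by_contra hcon
      push_neg at hcon
      obtain ⟨c, hc1, hc2⟩ := exists_between hcon
      have hctop : c ≠ ⊤ := hc2.ne_top
      have hev : ∀ᶠ k in atTop,
          c < ENNReal.ofReal ((dd (nn k) : ℝ) / (nn (k+1) : ℝ)) :=
        Filter.eventually_lt_of_lt_liminf hc2
      obtain ⟨K, hK⟩ := eventually_atTop.mp hev
      have hmem : c.toReal ∈ {r : ℝ | 0 ≤ r ∧
          ∀ᶠ N : ℕ in atTop, ∃ n : ℕ, 1 ≤ n ∧ n ≤ N ∧
            |(Tbeta β)^[n] x - x| < β ^ (-(r * (N : ℝ)))} := by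
        refine ⟨ENNReal.toReal_nonneg, ?_⟩
        rw [eventually_atTop]
        refine ⟨nn K, fun N hN => ?_⟩
        have hN1 : 1 ≤ N := le_trans (hone K) hN
        obtain ⟨k, hk1, hk2⟩ := hinterval N hN1
        have hkK : K ≤ k := by
          by_contra hc
          push_neg at hc
          have : nn (k+1) ≤ nn K := hmono.monotone (by omega)
          omega
        have hck := hK k hkK
        rw [ENNReal.lt_ofReal_iff_toReal_lt hctop] at hck
        have hnpos : (0:ℝ) < (nn (k+1) : ℝ) := by exact_mod_cast hone (k+1)
        rw [lt_div_iff₀ hnpos] at hck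
        refine ⟨nn k, hone k, hk1, ?_⟩
        apply hkey2 (c.toReal * (N:ℝ)) (nn k) (hone k)
        have hle : (N:ℝ) ≤ (nn (k+1) : ℝ) := by exact_mod_cast le_of_lt hk2
        have : c.toReal * (N:ℝ) ≤ c.toReal * (nn (k+1) : ℝ) :=
          mul_le_mul_of_nonneg_left hle ENNReal.toReal_nonneg
        linarith
      have : ENNReal.ofReal c.toReal ≤ rHatBeta β x := by
        unfold rHatBeta
        exact le_iSup₂ (f := fun r (_ : r ∈ _) => ENNReal.ofReal r) c.toReal hmem
      rw [ENNReal.ofReal_toReal hctop] at this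
      exact absurd (lt_of_le_of_lt this hc1) (lt_irrefl c)
end

section
/- Let 0 ≤ r < +∞ and let (n_k)_{k≥1}, (m_k)_{k≥1} be strictly increasing sequences of positive integers with n_k ≤ m_k for all k, such that limsup_{k→∞} (m_k − n_k)/n_k = r and liminf_{k→∞} (m_k − n_k)/n_{k+1} > r/(1+r). Then there exists k' such that n_{k+1} < m_k for all k ≥ k'. -/
open Filter
open scoped ENNReal

theorem eventually_overlap (r : ℝ) (hr0 : 0 ≤ r) (n m : ℕ → ℕ)
    (hnmono : StrictMono n) (hmmono : StrictMono m)
    (hpos : ∀ k, 0 < n k) (hle : ∀ k, n k ≤ m k)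
    (hsup : limsup (fun k => ENNReal.ofReal (((m k : ℝ) - (n k : ℝ)) / (n k : ℝ))) atTop
      = ENNReal.ofReal r)
    (hinf : ENNReal.ofReal (r / (1 + r)) <
      liminf (fun k => ENNReal.ofReal (((m k : ℝ) - (n k : ℝ)) / (n (k + 1) : ℝ))) atTop) :
    ∃ k' : ℕ, ∀ k, k' ≤ k → n (k + 1) < m k := by
  have h1r : (0:ℝ) < 1 + r := by linarith
  obtain ⟨c, hc0, hc1, hc2⟩ := ENNReal.lt_iff_exists_real_btwn.mp hinf
  have hc : r / (1 + r) < c :=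
    (ENNReal.ofReal_lt_ofReal_iff_of_nonneg (div_nonneg hr0 h1r.le)).mp hc1
  have hcpos : 0 < c := lt_of_le_of_lt (div_nonneg hr0 h1r.le) hc
  have hd : r < c * (1 + r) := (div_lt_iff₀ h1r).mp hc
  set ε : ℝ := (c * (1 + r) - r) / 2 with hεdef
  have hεpos : 0 < ε := by simp only [hεdef]; linarith
  have key : r + ε < c * (1 + r + ε) := by
    have : c * (1 + r + ε) = c * (1 + r) + c * ε := by ring
    nlinarith [mul_pos hcpos hεpos]
  -- eventual bounds
  have h1 : ∀ᶠ k in atTop,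
      ENNReal.ofReal (((m k : ℝ) - (n k : ℝ)) / (n k : ℝ)) < ENNReal.ofReal (r + ε) := by
    refine eventually_lt_of_limsup_lt ?_ ?_
    rw [hsup]
    · exact (ENNReal.ofReal_lt_ofReal_iff (by linarith)).mpr (by linarith)
    · exact ⟨⊤, Filter.eventually_map.mpr (Filter.Eventually.of_forall fun _ => le_top)⟩
  have h2 : ∀ᶠ k in atTop,
      ENNReal.ofReal c < ENNReal.ofReal (((m k : ℝ) - (n k : ℝ)) / (n (k + 1) : ℝ)) :=
    eventually_lt_of_lt_liminf hc2
  obtain ⟨k', hk'⟩ := eventually_atTop.mp (h1.and h2)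
  refine ⟨k', fun k hk => ?_⟩
  obtain ⟨hA, hB⟩ := hk' k hk
  by_contra h
  push_neg at h
  -- real variables
  have hNpos : (0:ℝ) < n k := by exact_mod_cast hpos k
  have hMpos : (0:ℝ) < m k := lt_of_lt_of_le hNpos (by exact_mod_cast hle k)
  have hPpos : (0:ℝ) < n (k + 1) := by exact_mod_cast hpos (k + 1)
  have hMN : (n k : ℝ) ≤ m k := by exact_mod_cast hle k
  have hMP : (m k : ℝ) ≤ n (k + 1) := by exact_mod_cast h
  have hrat1 : ((m k : ℝ) - n k) / n k < r + ε :=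
    (ENNReal.ofReal_lt_ofReal_iff (by linarith)).mp hA
  have hrat2 : c < ((m k : ℝ) - n k) / (n (k + 1) : ℝ) :=
    (ENNReal.ofReal_lt_ofReal_iff_of_nonneg hcpos.le).mp hB
  have hrat2' : c < ((m k : ℝ) - n k) / (m k : ℝ) :=
    lt_of_lt_of_le hrat2 (div_le_div_of_nonneg_left (by linarith) hMpos hMP)
  have hcM : c * m k < (m k : ℝ) - n k := (lt_div_iff₀ hMpos).mp hrat2'
  have hMr : (m k : ℝ) - n k < (r + ε) * n k := (div_lt_iff₀ hNpos).mp hrat1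
  nlinarith [mul_lt_mul_of_pos_left key hNpos, mul_pos hcpos hNpos, mul_pos hcpos hMpos,
    mul_lt_mul_of_pos_left hMr hcpos]
end

section
/- Let 0 < r̂ < r < +∞. Let (n_k)_{k≥1}, (m_k)_{k≥1} be sequences of positive integers with n_k ≤ m_k and n_{k+1} ≥ (1 + r̂/2) n_k for all k, and suppose that for every ε > 0 one has, for all sufficiently large k, m_k − n_k ≤ (r + ε) n_k and m_k − n_k ≥ (r̂ − ε) n_{k+1}. Then for every ε' > 0 there exists K such that for all k ≥ K, Σ_{i=1}^{k} (m_i − n_i) ≥ n_{k+1} ( r̂ r/(r − r̂) − ε' ). -/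
/-!
Put `a = r̂ - ε`, `b = r + ε` and `dₖ = mₖ - nₖ`, so that eventually `a nₖ₊₁ ≤ dₖ ≤ b nₖ`;
in particular `p nₖ₊₁ ≤ nₖ` with `p = a / b < 1`. If the partial sum `Sₖ` is `≥ x nₖ₊₁`, then
`Sₖ₊₁ = Sₖ + dₖ₊₁ ≥ (p x + a) nₖ₊₂`, and iterating the affine map `x ↦ p x + a` drives the
constant to its fixed point `a / (1 - p) = a b / (b - a)`, which tends to `r̂ r / (r - r̂)` as
`ε → 0`.
-/

open Filter Topology

section IncrementBounds

variable {s u : ℕ → ℝ} {K : ℕ}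

theorem mul_one_sub_pow_mul_le_of_increment {c p : ℝ} (hc : 0 ≤ c) (hp0 : 0 ≤ p) (hp1 : p ≤ 1)
    (hsK : 0 ≤ s K) (hinc : ∀ k ≥ K, c * (1 - p) * u (k + 1) ≤ s (k + 1) - s k)
    (hu_step : ∀ k ≥ K, p * u (k + 1) ≤ u k) :
    ∀ k ≥ K, c * (1 - p ^ (k - K)) * u k ≤ s k := by
  intro k hk
  induction k, hk using Nat.le_induction with
  | base => simpa using hsK
  | succ k hk ih =>
    have hcoef : 0 ≤ c * (1 - p ^ (k - K)) :=
      mul_nonneg hc (sub_nonneg.2 (pow_le_one₀ hp0 hp1))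
    rw [Nat.sub_add_comm hk]
    calc c * (1 - p ^ (k - K + 1)) * u (k + 1)
        = c * (1 - p ^ (k - K)) * (p * u (k + 1)) + c * (1 - p) * u (k + 1) := by ring
      _ ≤ c * (1 - p ^ (k - K)) * u k + (s (k + 1) - s k) :=
        add_le_add (mul_le_mul_of_nonneg_left (hu_step k hk) hcoef) (hinc k hk)
      _ ≤ s (k + 1) := by linarith

theorem eventually_mul_le_of_increment_bounds {a b t : ℝ} (ha : 0 < a) (hab : a < b)
    (hu : ∀ k, 0 ≤ u k) (hsK : 0 ≤ s K)
    (hinc : ∀ k ≥ K, a * u (k + 1) ≤ s (k + 1) - s k ∧ s (k + 1) - s k ≤ b * u k)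
    (ht : t < a * b / (b - a)) :
    ∀ᶠ k in atTop, t * u k ≤ s k := by
  have hb : 0 < b := ha.trans hab
  set p := a / b
  set c := a * b / (b - a)
  have hfix : c * (1 - p) = a := by
    simp only [c, p]
    field_simp [(sub_pos.2 hab).ne']
  have hp1 : p < 1 := (div_lt_one hb).2 hab
  have hbound := mul_one_sub_pow_mul_le_of_increment (div_pos (mul_pos ha hb) (sub_pos.2 hab)).le
    (div_pos ha hb).le hp1.le hsK (fun k hk => hfix ▸ (hinc k hk).1) fun k hk => by
      rw [div_mul_eq_mul_div, div_le_iff₀ hb, mul_comm (u k)]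
      linarith [hinc k hk]
  have hlim : Tendsto (fun k => c * (1 - p ^ (k - K))) atTop (𝓝 c) := by
    simpa using (((tendsto_pow_atTop_nhds_zero_of_lt_one (div_pos ha hb).le hp1).comp
      (tendsto_sub_atTop_nat K)).const_sub 1).const_mul c
  filter_upwards [hlim.eventually_const_lt ht, eventually_ge_atTop K] with k hkt hk
  exact (mul_le_mul_of_nonneg_right hkt.le (hu k)).trans (hbound k hk)

end IncrementBounds

theorem exists_pos_lt_mul_div_sub_of_lt {a b t : ℝ} (ha : 0 < a) (hab : a < b)
    (ht : t < a * b / (b - a)) :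
    ∃ ε, 0 < ε ∧ ε < a ∧ t < (a - ε) * (b + ε) / ((b + ε) - (a - ε)) := by
  have hcont : ContinuousAt (fun ε : ℝ => (a - ε) * (b + ε) / ((b + ε) - (a - ε))) 0 :=
    ContinuousAt.div (by fun_prop) (by fun_prop) (by simpa using (sub_pos.2 hab).ne')
  have hlt : ∀ᶠ ε in 𝓝 0, t < (a - ε) * (b + ε) / ((b + ε) - (a - ε)) :=
    hcont.eventually_const_lt (by simpa using ht)
  obtain ⟨ε, ⟨hεt, hεa⟩, hε⟩ :=
    ((hlt.and (eventually_lt_nhds ha)).filter_mono nhdsWithin_le_nhds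
      |>.and (self_mem_nhdsWithin (s := Set.Ioi 0))).exists
  exact ⟨ε, hε, hεa, hεt⟩

theorem sum_lower_bound_general (r rhat : ℝ) (h0 : 0 < rhat) (h1 : rhat < r)
    (n m : ℕ → ℕ)
    (hle : ∀ k, 1 ≤ k → n k ≤ m k)
    (hbound : ∀ ε : ℝ, 0 < ε → ∀ᶠ k in atTop,
      ((m k : ℝ) - (n k : ℝ) ≤ (r + ε) * (n k : ℝ) ∧
       (rhat - ε) * (n (k + 1) : ℝ) ≤ (m k : ℝ) - (n k : ℝ))) :
    ∀ ε' : ℝ, 0 < ε' → ∃ K : ℕ, ∀ k, K ≤ k →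
      (n (k + 1) : ℝ) * (rhat * r / (r - rhat) - ε')
        ≤ ∑ i ∈ Finset.Icc 1 k, ((m i : ℝ) - (n i : ℝ)) := by
  intro ε' hε'
  obtain ⟨ε, hε, hεr, hlt⟩ := exists_pos_lt_mul_div_sub_of_lt h0 h1 (sub_lt_self _ hε')
  obtain ⟨K, hK⟩ := eventually_atTop.1 (hbound ε hε)
  set s := fun k => ∑ i ∈ Finset.Icc 1 k, ((m i : ℝ) - (n i : ℝ))
  have hs_succ (k : ℕ) : s (k + 1) - s k = (m (k + 1) : ℝ) - n (k + 1) := by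
    simp only [s, Finset.sum_Icc_succ_top (Nat.le_add_left 1 k), add_sub_cancel_left]
  have hsK : 0 ≤ s K := Finset.sum_nonneg fun i hi =>
    sub_nonneg.2 (by exact_mod_cast hle i (Finset.mem_Icc.1 hi).1)
  have hev := eventually_mul_le_of_increment_bounds (u := fun k => (n (k + 1) : ℝ))
    (by linarith) (by linarith) (fun _ => Nat.cast_nonneg _) hsK
    (fun k hk => by
      rw [hs_succ]
      exact (hK (k + 1) (by omega)).symm) hlt
  obtain ⟨K', hK'⟩ := eventually_atTop.1 hev
  exact ⟨K', fun k hk => by simpa only [mul_comm] using hK' k hk⟩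

theorem sum_lower_bound (r rhat : ℝ) (h0 : 0 < rhat) (h1 : rhat < r)
    (n m : ℕ → ℕ)
    (hpos : ∀ k, 1 ≤ k → 0 < n k) (hle : ∀ k, 1 ≤ k → n k ≤ m k)
    (hgrow : ∀ k, 1 ≤ k → (1 + rhat / 2) * (n k : ℝ) ≤ (n (k + 1) : ℝ))
    (hbound : ∀ ε : ℝ, 0 < ε → ∀ᶠ k in atTop,
      ((m k : ℝ) - (n k : ℝ) ≤ (r + ε) * (n k : ℝ) ∧
       (rhat - ε) * (n (k + 1) : ℝ) ≤ (m k : ℝ) - (n k : ℝ))) :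
    ∀ ε' : ℝ, 0 < ε' → ∃ K : ℕ, ∀ k, K ≤ k →
      (n (k + 1) : ℝ) * (rhat * r / (r - rhat) - ε')
        ≤ ∑ i ∈ Finset.Icc 1 k, ((m i : ℝ) - (n i : ℝ)) :=
  sum_lower_bound_general r rhat h0 h1 n m hle hbound
end

section
/- Let β > 1 be real, s > 0, E ⊆ [0,1) a Borel set, and μ a finite Borel measure on [0,1) with μ(E) > 0 and μ([0,1) ∖ E) = 0 (μ is supported on E). Suppose there exist a constant c > 0 and N₀ ∈ ℕ such that for every n ≥ N₀ and every β-admissible word ω of length n, μ(I_n(ω)) ≤ c · |I_n(ω)|^s. Then the Hausdorff dimension of E is at least s. -/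
/-!
Every cylinder `I_n(x)` is an interval `[a, b)` on which `T_β^n` is `y ↦ β^n (y - a)`. If `b < 1`,
then `T_β^j b = 0` for some `j ≤ n`, with `j < n` unless `I_n(x)` is full. Walking through an
interval of length `β^{-n}` from left to right, the orders `j` of the successive right endpoints
strictly decrease until a full cylinder leaves the interval, so at most `n + 2` cylinders of
order `n` meet it, and their total mass is at most `(n + 2) c β^{-ns}`. For `t < s` this is
`O(β^{-nt})`, so `μ U ≤ C |U|^t` for all sets of small diameter, and the mass distribution
principle gives `dim_H E ≥ t`.
-/

open Set Filter MeasureTheory Topology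
open scoped ENNReal NNReal

/-- A word `ω` of length `n` over the digits is β-admissible if it occurs as the first `n`
digits of the β-expansion of some `x ∈ [0,1)`. -/
def IsAdmissible (β : ℝ) {n : ℕ} (ω : Fin n → ℤ) : Prop :=
  ∃ x ∈ Set.Ico (0 : ℝ) 1, ∀ j : Fin n, epsDigit β x ((j : ℕ) + 1) = ω j

/-- `Σ_β^n`, the set of β-admissible words of length `n`. -/
def SigmaSet (β : ℝ) (n : ℕ) : Set (Fin n → ℤ) := {ω | IsAdmissible β ω}

/-- The cylinder `I_n(ω)` of points of `[0,1)` whose first `n` digits form the word `ω`. -/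
def cylinder (β : ℝ) {n : ℕ} (ω : Fin n → ℤ) : Set ℝ :=
  {x ∈ Set.Ico (0 : ℝ) 1 | ∀ j : Fin n, epsDigit β x ((j : ℕ) + 1) = ω j}

/-- A word `ω` of length `n` is full if its cylinder has length `β^{-n}`. -/
def IsFull (β : ℝ) {n : ℕ} (ω : Fin n → ℤ) : Prop :=
  volume (cylinder β ω) = ENNReal.ofReal ((β ^ n)⁻¹)

theorem le_dimH_of_measure_le_mul_ediam_rpow {X : Type*} [EMetricSpace X] [MeasurableSpace X]
    [BorelSpace X] {μ : Measure X} {E : Set X} (hE : μ E ≠ 0) {C ε : ℝ≥0∞} (hC : C ≠ ∞)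
    (hε : 0 < ε) {t : ℝ≥0}
    (h : ∀ U : Set X, Metric.ediam U ≤ ε → μ U ≤ C * Metric.ediam U ^ (t : ℝ)) :
    (t : ℝ≥0∞) ≤ dimH E := by
  have hle : C⁻¹ • μ ≤ μH[t] := Measure.le_hausdorffMeasure _ _ ε hε fun U hU ↦ by
    rw [Measure.smul_apply, smul_eq_mul, ← ENNReal.div_eq_inv_mul]
    exact ENNReal.div_le_of_le_mul' (h U hU)
  refine le_dimH_of_hausdorffMeasure_ne_zero fun h0 ↦ ?_
  have := hle E
  rw [h0, Measure.smul_apply, smul_eq_mul, nonpos_iff_eq_zero, mul_eq_zero] at this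
  exact this.elim (ENNReal.inv_ne_zero.2 hC) hE

lemma floor_mul_sub_eq_iff {c a y : ℝ} {k : ℤ} (hc : 0 < c) :
    ⌊c * (y - a)⌋ = k ↔ y ∈ Ico (a + k / c) (a + (k + 1) / c) := by
  have hleft : a + k / c ≤ y ↔ (k : ℝ) ≤ c * (y - a) := by
    rw [← le_sub_iff_add_le', div_le_iff₀' hc]
  have hright : y < a + (k + 1) / c ↔ c * (y - a) < k + 1 := by
    rw [← sub_lt_iff_lt_add', lt_div_iff₀' hc]
  rw [Int.floor_eq_iff, mem_Ico, hleft, hright]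

namespace BetaExpansion

variable {β x y w : ℝ} {m n k : ℕ}

lemma Tbeta_eq_fract (β x : ℝ) : Tbeta β x = Int.fract (β * x) := rfl

lemma Tbeta_mem_Ico (β x : ℝ) : Tbeta β x ∈ Ico (0 : ℝ) 1 :=
  ⟨Int.fract_nonneg _, Int.fract_lt_one _⟩

lemma Tbeta_iterate_mem_Ico (hx : x ∈ Ico (0 : ℝ) 1) : ∀ n, (Tbeta β)^[n] x ∈ Ico (0 : ℝ) 1
  | 0 => hx
  | n + 1 => by rw [Function.iterate_succ_apply']; exact Tbeta_mem_Ico β _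

lemma Tbeta_iterate_zero (β : ℝ) (n : ℕ) : (Tbeta β)^[n] 0 = 0 :=
  Function.iterate_fixed (by simp [Tbeta]) n

lemma Tbeta_iterate_eq_zero_of_le (hx : (Tbeta β)^[m] x = 0) (hmn : m ≤ n) :
    (Tbeta β)^[n] x = 0 := by
  rw [← Nat.sub_add_cancel hmn, Function.iterate_add_apply, hx, Tbeta_iterate_zero]

lemma Tbeta_iterate_eq_pow_mul (hβ : 1 ≤ β) (hw : 0 ≤ w) (hk : β ^ k * w < 1) :
    ∀ i ≤ k, (Tbeta β)^[i] w = β ^ i * w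
  | 0, _ => by simp
  | i + 1, hi => by
    rw [Function.iterate_succ_apply', Tbeta_iterate_eq_pow_mul hβ hw hk i (by omega),
      Tbeta_eq_fract, ← mul_assoc, ← pow_succ', Int.fract_eq_self]
    exact ⟨by positivity, (mul_le_mul_of_nonneg_right (pow_le_pow_right₀ hβ hi) hw).trans_lt hk⟩

lemma floor_mul_Tbeta_iterate_eq_zero (hβ : 1 ≤ β) (hw : 0 ≤ w) (hk : β ^ k * w < 1)
    {i : ℕ} (hi : i < k) : ⌊β * (Tbeta β)^[i] w⌋ = 0 := by
  rw [Tbeta_iterate_eq_pow_mul hβ hw hk i hi.le, ← mul_assoc, ← pow_succ', Int.floor_eq_zero_iff]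
  exact ⟨by positivity, (mul_le_mul_of_nonneg_right (pow_le_pow_right₀ hβ hi) hw).trans_lt hk⟩

noncomputable def firstDigits (β x : ℝ) (n : ℕ) : Fin n → ℤ := fun j ↦ epsDigit β x (j + 1)

lemma mem_cylinder_firstDigits : y ∈ cylinder β (firstDigits β x n) ↔
    y ∈ Ico (0 : ℝ) 1 ∧ ∀ j < n, ⌊β * (Tbeta β)^[j] y⌋ = ⌊β * (Tbeta β)^[j] x⌋ := by
  simp [_root_.cylinder, firstDigits, epsDigit, Fin.forall_iff]

lemma mem_cylinder_firstDigits_self (hx : x ∈ Ico (0 : ℝ) 1) :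
    x ∈ cylinder β (firstDigits β x n) :=
  mem_cylinder_firstDigits.2 ⟨hx, fun _ _ ↦ rfl⟩

lemma isAdmissible_firstDigits (hx : x ∈ Ico (0 : ℝ) 1) : IsAdmissible β (firstDigits β x n) :=
  ⟨x, hx, fun _ ↦ rfl⟩

lemma eq_firstDigits_of_mem_cylinder {ω : Fin n → ℤ} (hx : x ∈ cylinder β ω) :
    ω = firstDigits β x n :=
  funext fun j ↦ (hx.2 j).symm

lemma cylinder_firstDigits_zero : cylinder β (firstDigits β x 0) = Ico 0 1 := by
  ext; simp [mem_cylinder_firstDigits]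

lemma cylinder_firstDigits_succ : cylinder β (firstDigits β x (n + 1)) =
    cylinder β (firstDigits β x n) ∩ {y | ⌊β * (Tbeta β)^[n] y⌋ = ⌊β * (Tbeta β)^[n] x⌋} := by
  ext y
  simp only [mem_cylinder_firstDigits, mem_inter_iff, mem_ofPred_eq, Nat.lt_succ_iff_lt_or_eq,
    or_imp, forall_and, forall_eq, and_assoc]

lemma cylinder_firstDigits_anti (hmn : m ≤ n) :
    cylinder β (firstDigits β x n) ⊆ cylinder β (firstDigits β x m) := fun _ hy ↦
  mem_cylinder_firstDigits.2
    ⟨(mem_cylinder_firstDigits.1 hy).1, fun j hj ↦ (mem_cylinder_firstDigits.1 hy).2 j (by omega)⟩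

lemma mem_cylinder_firstDigits_of_iterate_eq_zero (hβ : 1 ≤ β) (hmn : m ≤ n)
    (hx : (Tbeta β)^[m] x = 0) (hy : y ∈ cylinder β (firstDigits β x m))
    (hsmall : β ^ (n - m) * (Tbeta β)^[m] y < 1) : y ∈ cylinder β (firstDigits β x n) := by
  rw [mem_cylinder_firstDigits] at hy ⊢
  refine ⟨hy.1, fun j hj ↦ ?_⟩
  rcases lt_or_ge j m with hjm | hjm
  · exact hy.2 j hjm
  rw [Tbeta_iterate_eq_zero_of_le hx hjm, ← Nat.sub_add_cancel hjm, Function.iterate_add_apply,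
    floor_mul_Tbeta_iterate_eq_zero hβ (Tbeta_iterate_mem_Ico hy.1 m).1 hsmall (by omega)]
  simp

structure IsCylinderIco (β : ℝ) (n : ℕ) (x a b : ℝ) : Prop where
  cylinder_eq : cylinder β (firstDigits β x n) = Ico a b
  length_le : b - a ≤ (β ^ n)⁻¹
  iterate_eq : ∀ y ∈ Ico a b, (Tbeta β)^[n] y = β ^ n * (y - a)
  right_end : b < 1 → ∃ j ≤ n, (Tbeta β)^[j] b = 0 ∧ (b - a < (β ^ n)⁻¹ → j < n)

namespace IsCylinderIco

variable {a b : ℝ}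

lemma zero (β x : ℝ) : IsCylinderIco β 0 x 0 1 where
  cylinder_eq := cylinder_firstDigits_zero
  length_le := by simp
  iterate_eq := by simp
  right_end h := absurd h (lt_irrefl 1)

lemma mem (h : IsCylinderIco β n x a b) (hx : x ∈ Ico (0 : ℝ) 1) : x ∈ Ico a b :=
  h.cylinder_eq ▸ mem_cylinder_firstDigits_self hx

lemma succ (h : IsCylinderIco β n x a b) (hβ : 0 < β) (hx : x ∈ Ico (0 : ℝ) 1) :
    IsCylinderIco β (n + 1) x (a + ⌊β * (Tbeta β)^[n] x⌋ / β ^ (n + 1))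
      (min b (a + (⌊β * (Tbeta β)^[n] x⌋ + 1) / β ^ (n + 1))) := by
  set k := ⌊β * (Tbeta β)^[n] x⌋
  have hc : 0 < β ^ (n + 1) := by positivity
  have hk : (0 : ℝ) ≤ k := mod_cast Int.floor_nonneg.2
    (mul_nonneg hβ.le (Tbeta_iterate_mem_Ico hx n).1)
  have hfloor (y : ℝ) (hy : y ∈ Ico a b) : ⌊β * (Tbeta β)^[n] y⌋ = k ↔
      y ∈ Ico (a + k / β ^ (n + 1)) (a + (k + 1) / β ^ (n + 1)) := by
    rw [h.iterate_eq y hy, ← mul_assoc, ← pow_succ', floor_mul_sub_eq_iff hc]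
  have hlen : a + (k + 1) / β ^ (n + 1) - (a + k / β ^ (n + 1)) = (β ^ (n + 1))⁻¹ := by
    field_simp; ring
  have hsub : Ico (a + k / β ^ (n + 1)) (min b (a + (k + 1) / β ^ (n + 1))) ⊆ Ico a b :=
    Ico_subset_Ico (le_add_of_nonneg_right (by positivity)) (min_le_left _ _)
  constructor
  · rw [cylinder_firstDigits_succ, h.cylinder_eq]
    ext y
    refine ⟨fun ⟨hy, hyk⟩ ↦ ?_, fun hy ↦ ⟨hsub hy, (hfloor y (hsub hy)).2 ?_⟩⟩
    · have := (hfloor y hy).1 hyk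
      exact ⟨this.1, lt_min hy.2 this.2⟩
    · exact ⟨hy.1, hy.2.trans_le (min_le_right _ _)⟩
  · exact hlen ▸ sub_le_sub_right (min_le_right _ _) _
  · intro y hy
    have hyk := (hfloor y (hsub hy)).2 ⟨hy.1, hy.2.trans_le (min_le_right _ _)⟩
    rw [Function.iterate_succ_apply', Tbeta_eq_fract, ← Int.self_sub_floor, hyk,
      h.iterate_eq y (hsub hy)]
    field_simp
    ring
  · intro hb
    rcases le_or_gt b (a + (k + 1) / β ^ (n + 1)) with hle | hlt
    · rw [min_eq_left hle] at hb ⊢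
      obtain ⟨j, hj, hjb, -⟩ := h.right_end hb
      exact ⟨j, by omega, hjb, fun _ ↦ by omega⟩
    rw [min_eq_right hlt.le, hlen]
    refine ⟨n + 1, le_rfl, ?_, fun h ↦ absurd h (lt_irrefl _)⟩
    have hmem : a + (k + 1) / β ^ (n + 1) ∈ Ico a b :=
      ⟨le_add_of_nonneg_right (by positivity), hlt⟩
    rw [Function.iterate_succ_apply', h.iterate_eq _ hmem, Tbeta_eq_fract, ← mul_assoc,
      ← pow_succ', add_sub_cancel_left, mul_div_cancel₀ _ hc.ne']
    exact_mod_cast Int.fract_intCast (k + 1)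

lemma left_eq (h : IsCylinderIco β n x a b) (hβ : 0 < β) (hx : x ∈ Ico (0 : ℝ) 1)
    (hzero : (Tbeta β)^[n] x = 0) : a = x := by
  have h0 : β ^ n * (x - a) = 0 := (h.iterate_eq x (h.mem hx)).symm.trans hzero
  linarith [(mul_eq_zero.1 h0).resolve_left (pow_ne_zero _ hβ.ne')]

end IsCylinderIco

lemma exists_isCylinderIco (hβ : 0 < β) (hx : x ∈ Ico (0 : ℝ) 1) :
    ∀ n, ∃ a b, IsCylinderIco β n x a b
  | 0 => ⟨0, 1, .zero β x⟩
  | n + 1 =>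
    have ⟨_, _, h⟩ := exists_isCylinderIco hβ hx n
    ⟨_, _, h.succ hβ hx⟩

lemma volume_cylinder_le (hβ : 0 < β) (ω : Fin n → ℤ) :
    volume (cylinder β ω) ≤ ENNReal.ofReal (β ^ n)⁻¹ := by
  rcases (cylinder β ω).eq_empty_or_nonempty with he | ⟨x, hx⟩
  · simp [he]
  obtain ⟨a, b, h⟩ := exists_isCylinderIco hβ hx.1 n
  rw [eq_firstDigits_of_mem_cylinder hx, h.cylinder_eq, Real.volume_Ico]
  exact ENNReal.ofReal_le_ofReal h.length_le

def IsCoveredByCylinders (β : ℝ) (n k : ℕ) (S : Set ℝ) : Prop :=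
  ∃ W : Finset (Fin n → ℤ), W.card ≤ k ∧ (∀ ω ∈ W, IsAdmissible β ω) ∧
    S ∩ Ico 0 1 ⊆ ⋃ ω ∈ W, cylinder β ω

namespace IsCoveredByCylinders

variable {S S' : Set ℝ} {k' : ℕ}

lemma mono (h : IsCoveredByCylinders β n k S) (hk : k ≤ k') (hS : S' ∩ Ico 0 1 ⊆ S) :
    IsCoveredByCylinders β n k' S' :=
  let ⟨W, hW, hadm, hcov⟩ := h
  ⟨W, hW.trans hk, hadm, fun _ hx ↦ hcov ⟨hS hx, hx.2⟩⟩

lemma measure_inter_le (h : IsCoveredByCylinders β n k S) {μ : Measure ℝ} {M : ℝ≥0∞}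
    (hM : ∀ ω : Fin n → ℤ, IsAdmissible β ω → μ (cylinder β ω) ≤ M) :
    μ (S ∩ Ico 0 1) ≤ k * M := by
  obtain ⟨W, hW, hadm, hcov⟩ := h
  calc μ (S ∩ Ico 0 1) ≤ ∑ ω ∈ W, μ (cylinder β ω) :=
        (measure_mono hcov).trans (measure_biUnion_finset_le W _)
    _ ≤ W.card * M := by
        simpa using Finset.sum_le_card_nsmul W _ M fun ω hω ↦ hM ω (hadm ω hω)
    _ ≤ k * M := by gcongr

end IsCoveredByCylinders

namespace IsCylinderIco

/-- If `T^m y = 0` for some `m ≤ n`, then `I_n(y) = I_m(y) ∩ [y, y + β^{-n})`, so a non-full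
`I_n(y)` equals `I_m(y)`, whose right endpoint is a preimage of `0` of order less than `m`. -/
lemma exists_lt_of_length_lt {b : ℝ} (h : IsCylinderIco β n y y b) (hβ : 1 < β)
    (hy : y ∈ Ico (0 : ℝ) 1) (hmn : m ≤ n) (hym : (Tbeta β)^[m] y = 0) (hb : b < 1)
    (hlen : b - y < (β ^ n)⁻¹) : ∃ j < m, (Tbeta β)^[j] b = 0 := by
  have hβ0 : 0 < β := zero_lt_one.trans hβ
  obtain ⟨a', b', h'⟩ := exists_isCylinderIco hβ0 hy m
  have ha' : a' = y := h'.left_eq hβ0 hy hym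
  subst a'
  have hyb : y < b := (h.mem hy).2
  have hbb' : b ≤ b' := ((Ico_subset_Ico_iff hyb).1
    (h.cylinder_eq ▸ h'.cylinder_eq ▸ cylinder_firstDigits_anti hmn)).2
  have hb'b : b' ≤ b := by
    by_contra! hlt
    have hbm : b ∈ Ico y b' := ⟨hyb.le, hlt⟩
    have hsmall : β ^ (n - m) * (Tbeta β)^[m] b < 1 := by
      have := mul_lt_mul_of_pos_left hlen (pow_pos hβ0 n)
      rwa [h'.iterate_eq b hbm, ← mul_assoc, ← pow_add, Nat.sub_add_cancel hmn,
        ← mul_inv_cancel₀ (pow_ne_zero n hβ0.ne')]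
    have hbn := mem_cylinder_firstDigits_of_iterate_eq_zero hβ.le hmn hym
      (h'.cylinder_eq ▸ hbm) hsmall
    exact lt_irrefl b (h.cylinder_eq ▸ hbn).2
  obtain rfl := hb'b.antisymm hbb'
  obtain ⟨j, -, hj, hjm⟩ := h'.right_end hb
  exact ⟨j, hjm (hlen.trans_le (inv_anti₀ (by positivity) (pow_le_pow_right₀ hβ.le hmn))), hj⟩

lemma isCoveredByCylinders_Ico {a b V : ℝ} (h : IsCylinderIco β n y a b)
    (hy : y ∈ Ico (0 : ℝ) 1) (hV : b < 1 → b < V → IsCoveredByCylinders β n k (Ico b V)) :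
    IsCoveredByCylinders β n (k + 1) (Ico y V) := by
  have hay : a ≤ y := (h.mem hy).1
  by_cases hbV : b < 1 ∧ b < V
  · obtain ⟨W, hW, hadm, hcov⟩ := hV hbV.1 hbV.2
    refine ⟨insert (firstDigits β y n) W, (Finset.card_insert_le _ _).trans (by omega),
      Finset.forall_mem_insert _ _ _ |>.2 ⟨isAdmissible_firstDigits hy, hadm⟩, ?_⟩
    rintro z ⟨hz, hz01⟩
    rw [Finset.set_biUnion_insert, h.cylinder_eq]
    rcases lt_or_ge z b with hzb | hzb
    · exact Or.inl ⟨hay.trans hz.1, hzb⟩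
    · exact Or.inr (hcov ⟨⟨hzb, hz.2⟩, hz01⟩)
  · refine ⟨{firstDigits β y n}, by simp, by simpa using isAdmissible_firstDigits hy, ?_⟩
    rintro z ⟨hz, hz01⟩
    rw [Finset.set_biUnion_singleton, h.cylinder_eq]
    refine ⟨hay.trans hz.1, ?_⟩
    by_contra! hbz
    exact hbV ⟨hbz.trans_lt hz01.2, hbz.trans_lt hz.2⟩

end IsCylinderIco

lemma isCoveredByCylinders_Ico_of_iterate_eq_zero (hβ : 1 < β) (hmn : m ≤ n)
    (hy : y ∈ Ico (0 : ℝ) 1) (hym : (Tbeta β)^[m] y = 0) {V : ℝ} (hV : V ≤ y + (β ^ n)⁻¹) :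
    IsCoveredByCylinders β n (m + 1) (Ico y V) := by
  induction m using Nat.strong_induction_on generalizing y with
  | _ m ih =>
  have hβ0 : 0 < β := zero_lt_one.trans hβ
  obtain ⟨a, b, h⟩ := exists_isCylinderIco hβ0 hy n
  have ha : a = y := h.left_eq hβ0 hy (Tbeta_iterate_eq_zero_of_le hym hmn)
  subst a
  refine h.isCoveredByCylinders_Ico hy fun hb hbV ↦ ?_
  have hyb := (h.mem hy).2
  obtain ⟨j, hjm, hj⟩ := h.exists_lt_of_length_lt hβ hy hmn hym hb (by linarith)
  exact (ih j hjm (by omega) ⟨hy.1.trans hyb.le, hb⟩ hj (by linarith)).mono hjm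
    inter_subset_left

theorem isCoveredByCylinders_Ico (hβ : 1 < β) (n : ℕ) (u : ℝ) :
    IsCoveredByCylinders β n (n + 2) (Ico u (u + (β ^ n)⁻¹)) := by
  have hβ0 : 0 < β := zero_lt_one.trans hβ
  rcases lt_or_ge u 0 with hu | hu
  · exact (isCoveredByCylinders_Ico_of_iterate_eq_zero hβ (Nat.zero_le n) ⟨le_rfl, one_pos⟩
      (Tbeta_iterate_zero β 0) (by linarith)).mono (by omega) fun z hz ↦ ⟨hz.2.1, hz.1.2⟩
  rcases lt_or_ge u 1 with hu1 | hu1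
  · obtain ⟨a, b, h⟩ := exists_isCylinderIco hβ0 ⟨hu, hu1⟩ n
    refine h.isCoveredByCylinders_Ico ⟨hu, hu1⟩ fun hb _ ↦ ?_
    obtain ⟨j, hjn, hj, -⟩ := h.right_end hb
    have hub := (h.mem ⟨hu, hu1⟩).2
    exact (isCoveredByCylinders_Ico_of_iterate_eq_zero hβ hjn ⟨hu.trans hub.le, hb⟩ hj
      (by linarith)).mono (by omega) inter_subset_left
  · exact ⟨∅, by simp, by simp, fun z hz ↦ absurd (hu1.trans hz.1.1) (not_le.2 hz.2.2)⟩

section Measure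

variable {μ : Measure ℝ} {K : ℝ≥0∞} {s t : ℝ} {N₀ : ℕ}

lemma measure_le_of_subset_Ico (hβ : 1 < β) (hout : μ (Ico (0 : ℝ) 1)ᶜ = 0) (hs : 0 ≤ s)
    (hμ : ∀ ω : Fin n → ℤ, IsAdmissible β ω →
      μ (cylinder β ω) ≤ K * volume (cylinder β ω) ^ s)
    {U : Set ℝ} {u : ℝ} (hU : U ⊆ Ico u (u + (β ^ n)⁻¹)) :
    μ U ≤ K * ENNReal.ofReal ((n + 2) * ((β ^ n)⁻¹) ^ s) := by
  have hβ0 : 0 < β := zero_lt_one.trans hβ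
  rw [← measure_inter_conull hout]
  calc μ (U ∩ Ico 0 1) ≤ μ (Ico u (u + (β ^ n)⁻¹) ∩ Ico 0 1) :=
        measure_mono (inter_subset_inter_left _ hU)
    _ ≤ (n + 2 : ℕ) * (K * ENNReal.ofReal (β ^ n)⁻¹ ^ s) :=
        (isCoveredByCylinders_Ico hβ n u).measure_inter_le fun ω hω ↦
          (hμ ω hω).trans (by gcongr; exact volume_cylinder_le hβ0 ω)
    _ = K * ENNReal.ofReal ((n + 2) * ((β ^ n)⁻¹) ^ s) := by
        have hcast : ENNReal.ofReal ((n : ℝ) + 2) = ((n + 2 : ℕ) : ℝ≥0∞) := by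
          rw [← ENNReal.ofReal_natCast]; push_cast; rfl
        rw [ENNReal.ofReal_mul (by positivity), ENNReal.ofReal_rpow_of_pos (by positivity), hcast]
        ring

lemma tendsto_nat_add_two_mul_inv_pow_rpow (hβ : 1 < β) {r : ℝ} (hr : 0 < r) :
    Tendsto (fun n : ℕ ↦ ((n : ℝ) + 2) * ((β ^ n)⁻¹) ^ r) atTop (𝓝 0) := by
  have hβ0 : 0 < β := zero_lt_one.trans hβ
  have hq0 : 0 ≤ β ^ (-r) := Real.rpow_nonneg hβ0.le _
  have hq1 : β ^ (-r) < 1 := Real.rpow_lt_one_of_one_lt_of_neg hβ (neg_neg_of_pos hr)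
  have hpow (n : ℕ) : ((β ^ n)⁻¹) ^ r = (β ^ (-r)) ^ n := by
    rw [Real.inv_rpow (by positivity), ← Real.rpow_natCast_mul hβ0.le, ← Real.rpow_neg hβ0.le,
      ← Real.rpow_mul_natCast hβ0.le, neg_mul, mul_comm]
  simp only [hpow]
  simpa [add_mul] using (tendsto_self_mul_const_pow_of_lt_one hq0 hq1).add
    ((tendsto_pow_atTop_nhds_zero_of_lt_one hq0 hq1).const_mul 2)

lemma exists_nat_add_two_mul_rpow_le (hβ : 1 < β) (hts : t < s) :
    ∃ A, ∀ n : ℕ, ((n : ℝ) + 2) * ((β ^ n)⁻¹) ^ s ≤ A * ((β ^ n)⁻¹) ^ t := by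
  obtain ⟨A, hA⟩ := (tendsto_nat_add_two_mul_inv_pow_rpow hβ (sub_pos.2 hts)).bddAbove_range
  refine ⟨A, fun n ↦ ?_⟩
  have hpos : 0 < (β ^ n)⁻¹ := by positivity
  calc ((n : ℝ) + 2) * ((β ^ n)⁻¹) ^ s
      = ((n : ℝ) + 2) * ((β ^ n)⁻¹) ^ (s - t) * ((β ^ n)⁻¹) ^ t := by
        rw [mul_assoc, ← Real.rpow_add hpos, sub_add_cancel]
    _ ≤ A * ((β ^ n)⁻¹) ^ t := by gcongr; exact hA ⟨n, rfl⟩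

lemma measure_singleton_eq_zero (hβ : 1 < β) (hout : μ (Ico (0 : ℝ) 1)ᶜ = 0) (hK : K ≠ ∞)
    (hs : 0 < s) (hμ : ∀ n : ℕ, N₀ ≤ n → ∀ ω : Fin n → ℤ, IsAdmissible β ω →
      μ (cylinder β ω) ≤ K * volume (cylinder β ω) ^ s) (x : ℝ) : μ {x} = 0 := by
  have hβ0 : 0 < β := zero_lt_one.trans hβ
  have hlim := ENNReal.Tendsto.const_mul
    (ENNReal.tendsto_ofReal (tendsto_nat_add_two_mul_inv_pow_rpow hβ hs)) (Or.inr hK)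
  refine le_antisymm (ge_of_tendsto (by simpa using hlim) ?_) bot_le
  filter_upwards [eventually_ge_atTop N₀] with n hn
  exact measure_le_of_subset_Ico hβ hout hs.le (hμ n hn)
    (singleton_subset_iff.2 ⟨le_rfl, lt_add_of_pos_right x (by positivity)⟩)

theorem exists_measure_le_mul_ediam_rpow (hβ : 1 < β) (hout : μ (Ico (0 : ℝ) 1)ᶜ = 0)
    (hK : K ≠ ∞) (hμ : ∀ n : ℕ, N₀ ≤ n → ∀ ω : Fin n → ℤ, IsAdmissible β ω →
      μ (cylinder β ω) ≤ K * volume (cylinder β ω) ^ s) (ht : 0 < t) (hts : t < s) :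
    ∃ A : ℝ, ∃ ε > 0, ∀ U : Set ℝ, Metric.ediam U ≤ ε →
      μ U ≤ K * ENNReal.ofReal A * Metric.ediam U ^ t := by
  have hβ0 : 0 < β := zero_lt_one.trans hβ
  obtain ⟨A, hA⟩ := exists_nat_add_two_mul_rpow_le hβ hts
  refine ⟨A * (2 * β) ^ t, ENNReal.ofReal ((β ^ N₀)⁻¹ / 2), ENNReal.ofReal_pos.2 (by positivity),
    fun U hU ↦ ?_⟩
  rcases U.eq_empty_or_nonempty with rfl | hne
  · simp
  have hbdd : Bornology.IsBounded U :=
    Metric.isBounded_iff_ediam_ne_top.2 (hU.trans_lt ENNReal.ofReal_lt_top).ne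
  obtain ⟨u, d, hd, hUd, hdiam⟩ : ∃ u d, 0 ≤ d ∧ U ⊆ Icc u (u + d) ∧
      Metric.ediam U = ENNReal.ofReal d :=
    ⟨sInf U, sSup U - sInf U, sub_nonneg.2 (csInf_le_csSup hne hbdd.bddBelow hbdd.bddAbove),
      fun z hz ↦ ⟨csInf_le hbdd.bddBelow hz, by
        rw [add_sub_cancel]; exact le_csSup hbdd.bddAbove hz⟩, Real.ediam_eq hbdd⟩
  rw [hdiam] at hU ⊢
  rcases hd.eq_or_lt with rfl | hd
  · have hUu : U ⊆ {u} := by simpa using hUd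
    rw [measure_mono_null hUu (measure_singleton_eq_zero hβ hout hK (ht.trans hts) hμ u)]
    exact bot_le
  rw [ENNReal.ofReal_le_ofReal_iff (by positivity)] at hU
  have hβinv : 0 < β⁻¹ ∧ β⁻¹ < 1 := ⟨by positivity, inv_lt_one_of_one_lt₀ hβ⟩
  obtain ⟨n, hn1, hn⟩ := exists_nat_pow_near_of_lt_one (x := 2 * d) (by positivity)
    (by linarith [inv_le_one_of_one_le₀ (one_le_pow₀ hβ.le (n := N₀))]) hβinv.1 hβinv.2
  have hN₀ : N₀ ≤ n := Nat.lt_succ_iff.1 <| (pow_lt_pow_iff_right_of_lt_one₀ hβinv.1 hβinv.2).1 <|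
    hn1.trans_le (by rw [inv_pow]; linarith)
  rw [inv_pow] at hn1 hn
  have hlen : (β ^ n)⁻¹ ≤ 2 * β * d := by
    rw [pow_succ, mul_inv, ← lt_div_iff₀ (by positivity), div_inv_eq_mul] at hn1
    linarith
  have hUn : U ⊆ Ico u (u + (β ^ n)⁻¹) := fun z hz ↦
    ⟨(hUd hz).1, (hUd hz).2.trans_lt (by linarith)⟩
  calc μ U ≤ K * ENNReal.ofReal ((n + 2) * ((β ^ n)⁻¹) ^ s) :=
        measure_le_of_subset_Ico hβ hout (ht.trans hts).le (hμ n hN₀) hUn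
    _ ≤ K * ENNReal.ofReal (A * (2 * β * d) ^ t) := by
        have hA0 : 0 ≤ A := by linarith [show (2 : ℝ) ≤ A by simpa using hA 0]
        gcongr K * ENNReal.ofReal ?_
        exact (hA n).trans (by gcongr)
    _ = K * ENNReal.ofReal (A * (2 * β) ^ t) * ENNReal.ofReal d ^ t := by
        rw [Real.mul_rpow (by positivity) hd.le, ← mul_assoc,
          ENNReal.ofReal_mul' (by positivity), ENNReal.ofReal_rpow_of_nonneg hd.le ht.le, mul_assoc]

end Measure

end BetaExpansion

theorem mass_distribution_principle_general (β : ℝ) (hβ : 1 < β) (s : ℝ) (E : Set ℝ) (μ : Measure ℝ)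
    (hout : μ (Set.Ico (0 : ℝ) 1)ᶜ = 0) (hposE : 0 < μ E) (c : ℝ) (N₀ : ℕ)
    (hμ : ∀ n : ℕ, N₀ ≤ n → ∀ ω : Fin n → ℤ, IsAdmissible β ω →
      μ (cylinder β ω) ≤ ENNReal.ofReal c * volume (cylinder β ω) ^ s) :
    ENNReal.ofReal s ≤ dimH E := by
  refine ENNReal.le_of_forall_nnreal_lt fun t ht ↦ ?_
  rcases eq_or_ne t 0 with rfl | ht0
  · exact bot_le
  have hts : (t : ℝ) < s := by
    simpa using (ENNReal.lt_ofReal_iff_toReal_lt ENNReal.coe_ne_top).1 ht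
  obtain ⟨A, ε, hε, hU⟩ := BetaExpansion.exists_measure_le_mul_ediam_rpow hβ hout
    ENNReal.ofReal_ne_top hμ (NNReal.coe_pos.2 (pos_iff_ne_zero.2 ht0)) hts
  exact le_dimH_of_measure_le_mul_ediam_rpow hposE.ne'
    (ENNReal.mul_ne_top ENNReal.ofReal_ne_top ENNReal.ofReal_ne_top) hε hU

theorem mass_distribution_principle (β : ℝ) (hβ : 1 < β) (s : ℝ) (hs : 0 < s)
    (E : Set ℝ) (hE : MeasurableSet E) (hE1 : E ⊆ Set.Ico (0 : ℝ) 1)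
    (μ : Measure ℝ) [IsFiniteMeasure μ]
    (hout : μ (Set.Ico (0 : ℝ) 1)ᶜ = 0)
    (hnull : μ (Set.Ico (0 : ℝ) 1 \ E) = 0) (hposE : 0 < μ E)
    (c : ℝ) (hc : 0 < c) (N₀ : ℕ)
    (hμ : ∀ n : ℕ, N₀ ≤ n → ∀ ω : Fin n → ℤ, IsAdmissible β ω →
      μ (cylinder β ω) ≤ ENNReal.ofReal c * volume (cylinder β ω) ^ s) :
    ENNReal.ofReal s ≤ dimH E :=
  mass_distribution_principle_general β hβ s E μ hout hposE c N₀ hμ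
end
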